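/- arXiv:math/9506204 — 8 statements merged into one kernel-verified Lean document; each statement's English description precedes it below -/
import Mathlib

section
/- Let h : ℂ → ℂ be holomorphic on the strip S_r = {θ ∈ ℂ : |Im θ| < r}, 2π-periodic (h(θ+2π)=h(θ)), bounded by ‖h‖_r = sup over S_r of |h|, and suppose its average over one period vanishes: ∫₀^{2π} h(t+is) dt = 0 for real t-integration at fixed imaginary part. Then the 2π-periodic antiderivative H of h normalized so that ∫₀^{2π} H(t) dt = 0 satisfies ‖H‖_r ≤ 2π‖h‖_r. -/
open scoped Real Interval
open Complex Set

/-!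
Fix `θ = x + s i` in the strip and let `g t = H (t + s i)`. Cauchy's theorem on the rectangle
`[0, 2π] × [0, s]`, whose vertical sides cancel by periodicity, carries the vanishing mean of `H`
from the real line to the height `s`. Hence `2π H θ = ∫_x^{x+2π} (g x - g t) dt`, and the mean value
inequality bounds the integrand by `2π C`.
-/

theorem norm_le_of_intervalIntegral_eq_zero {E : Type*} [NormedAddCommGroup E] [NormedSpace ℝ E]
    [CompleteSpace E] {g : ℝ → E} {a T D : ℝ} (hT : 0 < T)
    (hg : IntervalIntegrable g MeasureTheory.volume a (a + T))
    (hmean : ∫ t in a..a + T, g t = 0) (hosc : ∀ t ∈ Ι a (a + T), ‖g a - g t‖ ≤ D) :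
    ‖g a‖ ≤ D := by
  have hsmul : ∫ t in a..a + T, (g a - g t) = T • g a := by
    rw [intervalIntegral.integral_sub intervalIntegrable_const hg, hmean, sub_zero,
      intervalIntegral.integral_const, add_sub_cancel_left]
  have hnorm : T * ‖g a‖ ≤ D * T := by
    have := intervalIntegral.norm_integral_le_of_norm_le_const hosc
    rwa [hsmul, norm_smul, Real.norm_of_nonneg hT.le, add_sub_cancel_left,
      abs_of_pos hT] at this
  nlinarith

theorem Function.Periodic.norm_le_of_hasDerivAt_of_intervalIntegral_eq_zero {E : Type*}
    [NormedAddCommGroup E] [NormedSpace ℝ E] [CompleteSpace E] {g g' : ℝ → E} {T C : ℝ}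
    (hT : 0 < T) (hper : Function.Periodic g T) (hderiv : ∀ t, HasDerivAt g (g' t) t)
    (hbound : ∀ t, ‖g' t‖ ≤ C) (hmean : ∫ t in 0..T, g t = 0) (x : ℝ) : ‖g x‖ ≤ T * C := by
  have hcont : Continuous g := continuous_iff_continuousAt.2 fun t => (hderiv t).continuousAt
  refine norm_le_of_intervalIntegral_eq_zero hT (hcont.intervalIntegrable _ _) ?_ fun t ht => ?_
  · rw [hper.intervalIntegral_add_eq x 0, zero_add, hmean]
  · have hlip := convex_univ.norm_image_sub_le_of_norm_hasDerivWithin_le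
      (fun t _ => (hderiv t).hasDerivWithinAt) (fun t _ => hbound t) (mem_univ t) (mem_univ x)
    have hdist : ‖x - t‖ ≤ T := by
      rw [uIoc_of_le (by linarith)] at ht
      rw [Real.norm_eq_abs, abs_sub_comm, abs_of_pos (by linarith [ht.1])]
      linarith [ht.2]
    calc ‖g x - g t‖ ≤ C * ‖x - t‖ := hlip
      _ ≤ C * T := by gcongr; exact (norm_nonneg _).trans (hbound t)
      _ = T * C := mul_comm C T

theorem Function.Periodic.intervalIntegral_add_mul_I_eq {E : Type*} [NormedAddCommGroup E]
    [NormedSpace ℂ E] [CompleteSpace E] {f : ℂ → E} {T : ℝ} (hper : Function.Periodic f T)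
    (s : ℝ) (hf : DifferentiableOn ℂ f ([[0, T]] ×ℂ [[0, s]])) :
    ∫ t in 0..T, f (t + s * I) = ∫ t in 0..T, f t := by
  have hrect := integral_boundary_rect_eq_zero_of_differentiableOn f 0 (T + s * I) (by simpa)
  have hsides : ∀ y : ℝ, f (T + y * I) = f ((0 : ℝ) + y * I) := fun y => by
    rw [ofReal_zero, zero_add, add_comm, hper]
  simp only [zero_re, zero_im, add_re, add_im, ofReal_re, ofReal_im, mul_re, mul_im, I_re, I_im,
    mul_zero, mul_one, sub_zero, zero_add, add_zero, ofReal_zero, zero_mul, hsides] at hrect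
  exact (sub_eq_zero.1 (by simpa using hrect)).symm

theorem norm_antideriv_le_general (r C : ℝ) (h H : ℂ → ℂ)
    (hbound : ∀ θ : ℂ, |θ.im| < r → ‖h θ‖ ≤ C)
    (hderiv : ∀ θ : ℂ, |θ.im| < r → HasDerivAt H (h θ) θ)
    (hHper : ∀ θ : ℂ, H (θ + 2 * π) = H θ)
    (hHmean : ∫ t in (0:ℝ)..(2 * π), H t = 0) :
    ∀ θ : ℂ, |θ.im| < r → ‖H θ‖ ≤ 2 * π * C := by
  intro θ hθ
  set g : ℝ → ℂ := fun t => H (t + θ.im * I)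
  have hline : ∀ t : ℝ, |((t : ℂ) + θ.im * I).im| < r := by simpa using hθ
  have hgper : Function.Periodic g (2 * π) := fun t => by
    simp only [g, show ((t + 2 * π : ℝ) : ℂ) + θ.im * I = t + θ.im * I + 2 * π by push_cast; ring,
      hHper]
  have hgderiv : ∀ t : ℝ, HasDerivAt g (h (t + θ.im * I)) t := fun t =>
    ((hderiv _ (hline t)).comp_add_const (t : ℂ) (θ.im * I)).comp_ofReal
  have hrect : [[0, 2 * π]] ×ℂ [[0, θ.im]] ⊆ {z : ℂ | |z.im| < r} := fun z hz =>
    (by simpa using abs_sub_left_of_mem_uIcc hz.2 : |z.im| ≤ |θ.im|).trans_lt hθ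
  have hgmean : ∫ t in 0..2 * π, g t = 0 := by
    have hHper' : Function.Periodic H ((2 * π : ℝ) : ℂ) := by
      simpa only [Function.Periodic, ofReal_mul, ofReal_ofNat] using hHper
    rw [hHper'.intervalIntegral_add_mul_I_eq θ.im fun z hz =>
      (hderiv z (hrect hz)).differentiableAt.differentiableWithinAt, hHmean]
  simpa only [g, re_add_im] using hgper.norm_le_of_hasDerivAt_of_intervalIntegral_eq_zero
    (by positivity) hgderiv (fun t => hbound _ (hline t)) hgmean θ.re

/-- If `h` is holomorphic on the strip `S_r = {θ : |Im θ| < r}`, `2π`-periodic, bounded by `C`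
on the strip, with vanishing average over a period, then the normalized `2π`-periodic
antiderivative `H` of `h` (with mean zero over a period on the real line) satisfies
`‖H‖_r ≤ 2π C`. -/
theorem norm_antideriv_le (r C : ℝ) (hr : 0 < r) (h H : ℂ → ℂ)
    (hhol : DifferentiableOn ℂ h {θ : ℂ | |θ.im| < r})
    (hper : ∀ θ : ℂ, h (θ + 2 * π) = h θ)
    (hbound : ∀ θ : ℂ, |θ.im| < r → ‖h θ‖ ≤ C)
    (hmean : ∀ s : ℝ, |s| < r → ∫ t in (0:ℝ)..(2 * π), h (t + s * I) = 0)
    (hderiv : ∀ θ : ℂ, |θ.im| < r → HasDerivAt H (h θ) θ)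
    (hHper : ∀ θ : ℂ, H (θ + 2 * π) = H θ)
    (hHmean : ∫ t in (0:ℝ)..(2 * π), H t = 0) :
    ∀ θ : ℂ, |θ.im| < r → ‖H θ‖ ≤ 2 * π * C :=
  norm_antideriv_le_general r C h H hbound hderiv hHper hHmean
end

section
/- Let f = (f₁,…,fₙ) : S_r → ℂⁿ be holomorphic on S_r = {θ ∈ ℂⁿ : |Im θ_j| < r for all j}, with each f_j 2π-periodic in each variable, and suppose ‖f‖_r := sup_{θ∈S_r, j} |f_j(θ)| ≤ r/(4n), where 0 < r < 1. Then the map φ(θ) = θ + f(θ) satisfies φ(S_{r/2}) ⊆ S_r, and for every θ ∈ S_{r/4} there exists a unique θ' ∈ S_{r/2} with φ(θ') = θ. -/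
open scoped Real
open Metric Set
open scoped NNReal

/-- The polystrip `S_ρ ⊂ ℂⁿ` of half-width `ρ`. -/
def polyStrip (n : ℕ) (ρ : ℝ) : Set (Fin n → ℂ) := {θ | ∀ j, |(θ j).im| < ρ}

lemma polyStrip_isOpen (n : ℕ) (ρ : ℝ) : IsOpen (polyStrip n ρ) := by
  have h : polyStrip n ρ = ⋂ j, {θ : Fin n → ℂ | |(θ j).im| < ρ} := by
    ext θ; simp [polyStrip]
  rw [h]
  exact isOpen_iInter_of_finite fun j =>
    isOpen_lt (Continuous.abs (Complex.continuous_im.comp (continuous_apply j)))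
      continuous_const

/-- Cauchy-estimate based Lipschitz bound on the closed half-strip. -/
lemma lip_aux (n : ℕ) (hn : 0 < n) (r : ℝ) (hr0 : 0 < r)
    (f : (Fin n → ℂ) → (Fin n → ℂ))
    (hhol : DifferentiableOn ℂ f (polyStrip n r))
    (hbound : ∀ θ ∈ polyStrip n r, ∀ j, ‖f θ j‖ ≤ r / (4 * n))
    (x y : Fin n → ℂ) (hx : ∀ j, |(x j).im| ≤ r / 2) (hy : ∀ j, |(y j).im| ≤ r / 2)
    (j : Fin n) : ‖f y j - f x j‖ ≤ 3 / 4 * ‖y - x‖ := by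
  have hn1 : (1 : ℝ) ≤ n := by exact_mod_cast hn
  by_cases hxy : y = x
  · simp [hxy]
  have hv : y - x ≠ 0 := sub_ne_zero.mpr hxy
  set v : Fin n → ℂ := y - x with hvdef
  have hw : 0 < ‖v‖ := norm_pos_iff.mpr hv
  set w : ℝ := ‖v‖ with hwdef
  set R : ℝ := r / (3 * w) with hRdef
  have hR : 0 < R := by positivity
  set g : ℂ → ℂ := fun z => f (x + z • v) j with hgdef
  -- membership of the perturbed points in the strip
  have memStrip : ∀ t : ℝ, t ∈ Icc (0:ℝ) 1 → ∀ z : ℂ, z ∈ closedBall (t:ℂ) R →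
      (x + z • v) ∈ polyStrip n r := by
    intro t ht z hz k
    have hxk := abs_le.mp (hx k)
    have hyk := abs_le.mp (hy k)
    have hsplit : (x + z • v) k = (x k + (t:ℂ) * v k) + (z - (t:ℂ)) * v k := by
      simp only [Pi.add_apply, Pi.smul_apply, smul_eq_mul]; ring
    have him1 : (x k + (t:ℂ) * v k).im = (1 - t) * (x k).im + t * (y k).im := by
      simp [Complex.add_im, Complex.mul_im, Complex.ofReal_re, Complex.ofReal_im,
        hvdef, Complex.sub_im]
      ring
    have him2 : |((z - (t:ℂ)) * v k).im| ≤ R * w := by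
      calc |((z - (t:ℂ)) * v k).im| ≤ ‖(z - (t:ℂ)) * v k‖ := Complex.abs_im_le_norm _
        _ = ‖z - (t:ℂ)‖ * ‖v k‖ := norm_mul _ _
        _ ≤ R * w := by
            apply mul_le_mul _ (norm_le_pi_norm v k) (norm_nonneg _) hR.le
            rwa [mem_closedBall, dist_eq_norm] at hz
    have hRw : R * w = r / 3 := by rw [hRdef]; field_simp
    have h1 : |(x k + (t:ℂ) * v k).im| ≤ r / 2 := by
      rw [him1, abs_le]
      constructor <;> nlinarith [ht.1, ht.2]
    calc |((x + z • v) k).im| = |(x k + (t:ℂ) * v k).im + ((z - (t:ℂ)) * v k).im| := by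
          rw [hsplit, Complex.add_im]
      _ ≤ |(x k + (t:ℂ) * v k).im| + |((z - (t:ℂ)) * v k).im| := abs_add_le _ _
      _ ≤ r / 2 + R * w := add_le_add h1 him2
      _ < r := by rw [hRw]; linarith
  -- differentiability of g
  have hgAt : ∀ z : ℂ, (x + z • v) ∈ polyStrip n r → DifferentiableAt ℂ g z := by
    intro z hzin
    have hf : DifferentiableAt ℂ f (x + z • v) :=
      hhol.differentiableAt ((polyStrip_isOpen n r).mem_nhds hzin)
    have hinner : DifferentiableAt ℂ (fun z : ℂ => x + z • v) z :=
      (differentiableAt_const x).add (differentiableAt_id.smul_const v)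
    exact differentiableAt_pi.mp (hf.comp z hinner) j
  -- Cauchy estimate for deriv g on [0,1]
  have hderiv : ∀ t : ℝ, t ∈ Icc (0:ℝ) 1 → ‖deriv g (t:ℂ)‖ ≤ 3 / (4 * n) * w := by
    intro t ht
    have hd : DiffContOnCl ℂ g (ball (t:ℂ) R) := by
      apply DifferentiableOn.diffContOnCl
      rw [closure_ball _ hR.ne']
      intro z hz
      exact (hgAt z (memStrip t ht z hz)).differentiableWithinAt
    have hC : ∀ z ∈ sphere (t:ℂ) R, ‖g z‖ ≤ r / (4 * n) := fun z hz =>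
      hbound _ (memStrip t ht z (sphere_subset_closedBall hz)) j
    have := Complex.norm_deriv_le_of_forall_mem_sphere_norm_le hR hd hC
    have heq : r / (4 * n) / R = 3 / (4 * n) * w := by
      rw [hRdef]; field_simp
    rwa [heq] at this
  -- mean value inequality along the segment [0,1] ⊂ ℂ
  set s : Set ℂ := segment ℝ (0:ℂ) 1 with hsdef
  have hsmem : ∀ z ∈ s, ∃ t : ℝ, t ∈ Icc (0:ℝ) 1 ∧ z = (t:ℂ) := by
    intro z hz
    rw [hsdef, segment_eq_image] at hz
    obtain ⟨t, ht, hzt⟩ := hz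
    exact ⟨t, ht, by rw [← hzt]; simp [Complex.real_smul]⟩
  have hmvt : ‖g 1 - g 0‖ ≤ 3 / (4 * n) * w * ‖(1:ℂ) - 0‖ := by
    apply Convex.norm_image_sub_le_of_norm_hasDerivWithin_le
      (f' := fun z => deriv g z) ?_ ?_ (convex_segment _ _)
      (left_mem_segment ℝ (0:ℂ) 1) (right_mem_segment ℝ (0:ℂ) 1)
    · intro z hz
      obtain ⟨t, ht, rfl⟩ := hsmem z hz
      exact ((hgAt _ (memStrip t ht _ (mem_closedBall_self hR.le))).hasDerivAt).hasDerivWithinAt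
    · intro z hz
      obtain ⟨t, ht, rfl⟩ := hsmem z hz
      exact hderiv t ht
  have hg1 : g 1 = f y j := by
    have : x + (1:ℂ) • v = y := by
      funext k; simp [hvdef]
    rw [hgdef]; simp only [this]
  have hg0 : g 0 = f x j := by
    have : x + (0:ℂ) • v = x := by funext k; simp
    rw [hgdef]; simp only [this]
  rw [hg1, hg0] at hmvt
  simp only [sub_zero, norm_one, mul_one] at hmvt
  calc ‖f y j - f x j‖ ≤ 3 / (4 * n) * w := hmvt
    _ ≤ 3 / 4 * w := by
        apply mul_le_mul_of_nonneg_right _ hw.le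
        rw [div_le_div_iff₀ (by positivity) (by norm_num)]
        nlinarith
    _ = 3 / 4 * ‖y - x‖ := by rw [hwdef]

/-- If `f : S_r → ℂⁿ` is holomorphic, `2π`-periodic in each variable, and
`‖f‖_r ≤ r/(4n)` with `0 < r < 1`, then `φ(θ) = θ + f(θ)` maps `S_{r/2}` into `S_r`, and
every `θ ∈ S_{r/4}` has a unique preimage `θ' ∈ S_{r/2}` under `φ`. -/
theorem perturbation_of_id_injective (n : ℕ) (hn : 0 < n) (r : ℝ) (hr0 : 0 < r) (hr1 : r < 1)
    (f : (Fin n → ℂ) → (Fin n → ℂ))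
    (hhol : DifferentiableOn ℂ f (polyStrip n r))
    (hper : ∀ θ : Fin n → ℂ, ∀ j k : Fin n,
      f (fun i => θ i + if i = j then (2 * π : ℂ) else 0) k = f θ k)
    (hbound : ∀ θ ∈ polyStrip n r, ∀ j, ‖f θ j‖ ≤ r / (4 * n)) :
    (∀ θ ∈ polyStrip n (r / 2), θ + f θ ∈ polyStrip n r) ∧
      (∀ θ ∈ polyStrip n (r / 4),
        ∃! θ' : Fin n → ℂ, θ' ∈ polyStrip n (r / 2) ∧ θ' + f θ' = θ) := by
  have hn1 : (1 : ℝ) ≤ n := by exact_mod_cast hn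
  have hquarter : r / (4 * n) ≤ r / 4 := by
    rw [div_le_div_iff₀ (by positivity) (by norm_num)]
    nlinarith
  constructor
  · intro θ hθ j
    have hθr : θ ∈ polyStrip n r := fun k => lt_trans (hθ k) (by linarith)
    have h1 : |((θ + f θ) j).im| ≤ |(θ j).im| + ‖f θ j‖ := by
      simp only [Pi.add_apply, Complex.add_im]
      exact le_trans (abs_add_le _ _) (by
        gcongr; exact Complex.abs_im_le_norm _)
    have h2 := hbound θ hθr j
    have h3 := hθ j
    linarith
  · intro θ hθ
    -- the closed half-strip
    set K : Set (Fin n → ℂ) := {η | ∀ j, |(η j).im| ≤ r / 2} with hKdef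
    have hKc : IsComplete K := by
      apply IsClosed.isComplete
      have h : K = ⋂ j, {η : Fin n → ℂ | |(η j).im| ≤ r / 2} := by
        ext η; simp [hKdef]
      rw [h]
      exact isClosed_iInter fun j =>
        isClosed_le (Continuous.abs (Complex.continuous_im.comp (continuous_apply j)))
          continuous_const
    have hKstrip : K ⊆ polyStrip n r := fun η hη k => lt_of_le_of_lt (hη k) (by linarith)
    set T : (Fin n → ℂ) → (Fin n → ℂ) := fun η => θ - f η with hTdef
    have hmaps : MapsTo T K K := by
      intro η hη j
      have h1 := hbound η (hKstrip hη) j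
      have h2 := hθ j
      calc |(T η j).im| = |(θ j).im - (f η j).im| := by
            simp [hTdef, Complex.sub_im]
        _ ≤ |(θ j).im| + |(f η j).im| := abs_sub _ _
        _ ≤ r / 4 + r / 4 :=
            add_le_add h2.le (le_trans (le_trans (Complex.abs_im_le_norm _) h1) hquarter)
        _ = r / 2 := by ring
    -- contraction estimate
    have hTdist : ∀ a ∈ K, ∀ b ∈ K, dist (T a) (T b) ≤ 3 / 4 * dist a b := by
      intro a ha b hb
      rw [dist_pi_le_iff (by positivity)]
      intro j
      have hkey := lip_aux n hn r hr0 f hhol hbound a b ha hb j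
      calc dist (T a j) (T b j) = ‖f b j - f a j‖ := by
            rw [dist_eq_norm]; congr 1
            simp [hTdef]
        _ ≤ 3 / 4 * ‖b - a‖ := hkey
        _ = 3 / 4 * dist a b := by rw [dist_eq_norm, norm_sub_rev]
    have hcontr : ContractingWith (3/4 : ℝ≥0) (hmaps.restrict T K K) := by
      constructor
      · rw [← NNReal.coe_lt_coe]; norm_num
      · apply LipschitzWith.of_dist_le_mul
        rintro ⟨a, ha⟩ ⟨b, hb⟩
        have : ((3/4 : ℝ≥0) : ℝ) = 3 / 4 := by norm_num
        rw [this]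
        simpa [Subtype.dist_eq, MapsTo.restrict, Subtype.map] using hTdist a ha b hb
    have hθK : θ ∈ K := fun j => le_of_lt (lt_of_lt_of_le (hθ j) (by linarith))
    have hne : edist θ (T θ) ≠ ⊤ := edist_ne_top _ _
    set θ' : Fin n → ℂ := ContractingWith.efixedPoint' T hKc hmaps hcontr θ hθK hne with hθ'def
    have hmem : θ' ∈ K := ContractingWith.efixedPoint_mem' hKc hmaps hcontr hθK hne
    have hfix : T θ' = θ' := ContractingWith.efixedPoint_isFixedPt' hKc hmaps hcontr hθK hne
    have hfixeq : θ' + f θ' = θ := by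
      have h : θ - f θ' = θ' := hfix
      exact (sub_eq_iff_eq_add.mp h).symm
    have hmem' : θ' ∈ polyStrip n (r / 2) := by
      intro j
      have hj : θ' j = θ j - f θ' j := by
        have h := congrFun hfixeq j
        simp only [Pi.add_apply] at h
        linear_combination h
      have h1 := hbound θ' (hKstrip hmem) j
      have h2 := hθ j
      calc |(θ' j).im| = |(θ j).im - (f θ' j).im| := by rw [hj, Complex.sub_im]
        _ ≤ |(θ j).im| + |(f θ' j).im| := abs_sub _ _
        _ < r / 4 + r / 4 := by
            have := le_trans (le_trans (Complex.abs_im_le_norm _) h1) hquarter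
            -- need strict: |(θ j).im| < r/4
            have h4 : (0:ℝ) ≤ r / 4 := by positivity
            exact add_lt_add_of_lt_of_le h2 this
        _ = r / 2 := by ring
    refine ⟨θ', ⟨hmem', hfixeq⟩, ?_⟩
    rintro b ⟨hbmem, hbeq⟩
    have hbK : b ∈ K := fun j => (hbmem j).le
    have hθ'K : θ' ∈ K := hmem
    have hd : dist b θ' ≤ 3 / 4 * dist b θ' := by
      rw [dist_pi_le_iff (by positivity)]
      intro j
      have hkey := lip_aux n hn r hr0 f hhol hbound b θ' hbK hθ'K j
      have hdiff : b j - θ' j = f θ' j - f b j := by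
        have h := congrFun (hbeq.trans hfixeq.symm) j
        simp only [Pi.add_apply] at h
        linear_combination h
      calc dist (b j) (θ' j) = ‖f θ' j - f b j‖ := by rw [dist_eq_norm, hdiff]
        _ ≤ 3 / 4 * ‖θ' - b‖ := hkey
        _ = 3 / 4 * dist b θ' := by rw [dist_eq_norm, norm_sub_rev]
    have : dist b θ' = 0 := by
      have := dist_nonneg (x := b) (y := θ')
      linarith
    exact dist_eq_zero.mp this
end

section
/- Let f : S¹ → ℂ be a C¹ immersion such that, writing f(e^{iθ})' (derivative in θ) = ρ(θ)e^{i(θ + h(θ))} with ρ > 0 and h a 2π-periodic real function satisfying 1 + h'(θ) > 0 for all θ (i.e. f is non-critical with Gauss degree 1). Then f is an embedding (injective). -/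
open scoped Real
open Complex

/-!
Write `F' = ρ e^{iφ}` with tangent angle `φ(θ) = θ + h(θ)`, strictly increasing with
`φ(θ + 2π) = φ(θ) + 2π`. If the angle turns by at most `π` from `a` to `b > a`, then after rotating by
`e^{-iφ(a)}` the velocity points into the open upper half-plane on `(a, b)`, so the imaginary part of
the rotated curve strictly increases and `F a ≠ F b`. For `a < b` in a period, either the arc from `a`
to `b` or the arc from `b` to `a + 2π` turns by at most `π`, since together they turn by `2π`.
-/

open Set

theorem strictMonoOn_im_of_hasDerivAt {F F' : ℝ → ℂ} {D : Set ℝ} (hD : Convex ℝ D)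
    (hF : ∀ θ ∈ D, HasDerivAt F (F' θ) θ) (hpos : ∀ θ ∈ interior D, 0 < (F' θ).im) :
    StrictMonoOn (fun θ => (F θ).im) D := by
  have hderiv : ∀ θ ∈ D, HasDerivAt (fun θ => (F θ).im) (F' θ).im θ := fun θ hθ =>
    imCLM.hasFDerivAt.comp_hasDerivAt θ (hF θ hθ)
  refine strictMonoOn_of_hasDerivWithinAt_pos hD
    (fun θ hθ => (hderiv θ hθ).continuousAt.continuousWithinAt)
    (fun θ hθ => (hderiv θ (interior_subset hθ)).hasDerivWithinAt) hpos

theorem ne_of_hasDerivAt_of_angle_sub_le_pi {F : ℝ → ℂ} {ρ φ : ℝ → ℝ} {a b : ℝ} (hab : a < b)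
    (hF : ∀ θ ∈ Icc a b, HasDerivAt F (ρ θ * exp (φ θ * I)) θ) (hρ : ∀ θ ∈ Ioo a b, 0 < ρ θ)
    (hφ : StrictMonoOn φ (Icc a b)) (hturn : φ b - φ a ≤ π) :
    F a ≠ F b := by
  set c : ℂ := exp (-(φ a * I))
  have hrot : ∀ θ, c * (ρ θ * exp (φ θ * I)) = ρ θ * exp ((φ θ - φ a : ℝ) * I) := fun θ => by
    rw [mul_left_comm, ← exp_add]
    push_cast
    ring_nf
  have hmono : StrictMonoOn (fun θ => (c * F θ).im) (Icc a b) := by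
    refine strictMonoOn_im_of_hasDerivAt (convex_Icc a b) (fun θ hθ => (hF θ hθ).const_mul c) ?_
    intro θ hθ
    rw [interior_Icc] at hθ
    have hθI : θ ∈ Icc a b := Ioo_subset_Icc_self hθ
    have hlo := hφ (left_mem_Icc.2 hab.le) hθI hθ.1
    have hhi := hφ hθI (right_mem_Icc.2 hab.le) hθ.2
    rw [hrot, im_ofReal_mul, exp_ofReal_mul_I_im]
    exact mul_pos (hρ θ hθ) (Real.sin_pos_of_pos_of_lt_pi (by linarith) (by linarith))
  intro hFab
  have := hmono (left_mem_Icc.2 hab.le) (right_mem_Icc.2 hab.le) hab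
  simp only [hFab, lt_irrefl] at this

theorem injOn_Ico_of_hasDerivAt_of_angle_add_two_pi {F : ℝ → ℂ} {ρ φ : ℝ → ℝ}
    (hF : ∀ θ, HasDerivAt F (ρ θ * exp (φ θ * I)) θ) (hρ : ∀ θ, 0 < ρ θ) (hφ : StrictMono φ)
    (hφper : ∀ θ, φ (θ + 2 * π) = φ θ + 2 * π) (hFper : ∀ θ, F (θ + 2 * π) = F θ) (c : ℝ) :
    InjOn F (Ico c (c + 2 * π)) := by
  have hne_of_lt : ∀ a b, a < b → b < a + 2 * π → F a ≠ F b := by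
    intro a b hab hb
    rcases le_or_gt (φ b - φ a) π with hturn | hturn
    · exact ne_of_hasDerivAt_of_angle_sub_le_pi hab (fun θ _ => hF θ) (fun θ _ => hρ θ)
        (hφ.strictMonoOn _) hturn
    · rw [ne_comm, ← hFper a]
      refine ne_of_hasDerivAt_of_angle_sub_le_pi hb (fun θ _ => hF θ) (fun θ _ => hρ θ)
        (hφ.strictMonoOn _) ?_
      linarith [hφper a]
  intro a ha b hb hFab
  rcases lt_trichotomy a b with hlt | heq | hgt
  · exact absurd hFab (hne_of_lt a b hlt (by linarith [ha.1, hb.2]))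
  · exact heq
  · exact absurd hFab.symm (hne_of_lt b a hgt (by linarith [hb.1, ha.2]))

theorem noncritical_degree_one_is_embedding_general (F : ℝ → ℂ) (ρ h h' : ℝ → ℝ)
    (hFper : ∀ θ, F (θ + 2 * π) = F θ)
    (hρ : ∀ θ, 0 < ρ θ)
    (hhper : ∀ θ, h (θ + 2 * π) = h θ)
    (hh' : ∀ θ, HasDerivAt h (h' θ) θ)
    (hconv : ∀ θ, 0 < 1 + h' θ)
    (hFderiv : ∀ θ, deriv F θ = ρ θ * Complex.exp (Complex.I * (θ + h θ))) :
    ∀ θ₁ ∈ Set.Ico (0 : ℝ) (2 * π), ∀ θ₂ ∈ Set.Ico (0 : ℝ) (2 * π),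
      F θ₁ = F θ₂ → θ₁ = θ₂ := by
  -- `deriv` is `0` where `F` is not differentiable, so `deriv F θ ≠ 0` already gives differentiability.
  have hF : ∀ θ, HasDerivAt F (ρ θ * exp ((θ + h θ : ℝ) * I)) θ := fun θ => by
    have hne : deriv F θ ≠ 0 := by
      rw [hFderiv θ]
      exact mul_ne_zero (ofReal_ne_zero.2 (hρ θ).ne') (exp_ne_zero _)
    have hderiv : (ρ θ * exp ((θ + h θ : ℝ) * I) : ℂ) = deriv F θ := by
      rw [hFderiv θ]
      push_cast
      ring_nf
    exact hderiv ▸ (differentiableAt_of_deriv_ne_zero hne).hasDerivAt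
  have hφ : StrictMono fun θ => θ + h θ :=
    strictMono_of_hasDerivAt_pos (fun θ => (hasDerivAt_id θ).add (hh' θ)) hconv
  have hφper : ∀ θ, θ + 2 * π + h (θ + 2 * π) = θ + h θ + 2 * π := fun θ => by
    rw [hhper]; ring
  have := injOn_Ico_of_hasDerivAt_of_angle_add_two_pi hF hρ hφ hφper hFper 0
  rwa [zero_add] at this

/-- A non-critical `C¹` immersed closed curve with Gauss degree `1` is an embedding:
if `F(θ) = f(e^{iθ})` satisfies `F'(θ) = ρ(θ) e^{i(θ + h(θ))}` with `ρ > 0`, `h` a `2π`-periodic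
real function with `1 + h' > 0`, then `F` is injective on `[0, 2π)`. -/
theorem noncritical_degree_one_is_embedding (F : ℝ → ℂ) (ρ h h' : ℝ → ℝ)
    (hF : ContDiff ℝ 1 F)
    (hFper : ∀ θ, F (θ + 2 * π) = F θ)
    (hρ : ∀ θ, 0 < ρ θ)
    (hhper : ∀ θ, h (θ + 2 * π) = h θ)
    (hh' : ∀ θ, HasDerivAt h (h' θ) θ)
    (hconv : ∀ θ, 0 < 1 + h' θ)
    (hFderiv : ∀ θ, deriv F θ = ρ θ * Complex.exp (Complex.I * (θ + h θ))) :
    ∀ θ₁ ∈ Set.Ico (0 : ℝ) (2 * π), ∀ θ₂ ∈ Set.Ico (0 : ℝ) (2 * π),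
      F θ₁ = F θ₂ → θ₁ = θ₂ :=
  noncritical_degree_one_is_embedding_general F ρ h h' hFper hρ hhper hh' hconv hFderiv
end

section
/- Let f₀, f₁ : S¹ → ℂ be non-critical immersions with the same Gauss-map degree d ≠ 0. Then f₀ and f₁ are regularly homotopic through a family of non-critical immersions. -/
open scoped Real

lemma smooth_inverse (ν : ℝ → ℝ) (hν : ContDiff ℝ (⊤ : ℕ∞) ν)
    (hd : ∀ x, 0 < deriv ν x) (hsurj : Function.Surjective ν) :
    ∃ ψ : ℝ → ℝ, ContDiff ℝ (⊤ : ℕ∞) ψ ∧ (∀ x, ψ (ν x) = x) ∧ (∀ u, ν (ψ u) = u) := by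
  have hmono : StrictMono ν := strictMono_of_deriv_pos hd
  let e : ℝ ≃o ℝ := StrictMono.orderIsoOfSurjective ν hmono hsurj
  let P : OpenPartialHomeomorph ℝ ℝ := e.toHomeomorph.toOpenPartialHomeomorph
  have hPcoe : (P : ℝ → ℝ) = ν := rfl
  have hleft : ∀ x, P.symm (ν x) = x := fun x => e.symm_apply_apply x
  have hright : ∀ u, ν (P.symm u) = u := fun u => e.apply_symm_apply u
  refine ⟨P.symm, ?_, hleft, hright⟩
  rw [contDiff_iff_contDiffAt]
  intro a
  have hda : HasDerivAt ν (deriv ν (P.symm a)) (P.symm a) :=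
    ((hν.differentiable (by simp)) (P.symm a)).hasDerivAt
  have hne : deriv ν (P.symm a) ≠ 0 := (hd _).ne'
  have hF : HasFDerivAt (P : ℝ → ℝ)
      (↑(ContinuousLinearEquiv.unitsEquivAut ℝ (Units.mk0 _ hne)) : ℝ →L[ℝ] ℝ) (P.symm a) := by
    rw [hPcoe]
    exact hda.hasFDerivAt_equiv hne
  exact P.contDiffAt_symm (by simp [P]) hF (hν.contDiffAt)

lemma surj_of_shift (ν : ℝ → ℝ) (hc : Continuous ν) (E : ℝ) (hE : 0 < E)
    (hshift : ∀ x, ν (x + 2*π) = ν x + E) : Function.Surjective ν := by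
  have hiter : ∀ n : ℕ, ν (2*π*n) = ν 0 + E*n := by
    intro n; induction n with
    | zero => simp
    | succ k ih =>
      have h1 : (2*π*((k:ℝ)+1) : ℝ) = 2*π*k + 2*π := by ring
      push_cast
      rw [h1, hshift, ih]; ring
  have hiter' : ∀ n : ℕ, ν (-(2*π*n)) = ν 0 - E*n := by
    intro n; induction n with
    | zero => simp
    | succ k ih =>
      have h1 : (-(2*π*(k:ℝ)) : ℝ) = -(2*π*((k:ℝ)+1)) + 2*π := by ring
      have := hshift (-(2*π*((k:ℝ)+1)))
      rw [← h1, ih] at this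
      push_cast
      linarith
  intro y
  obtain ⟨n, hn⟩ := exists_nat_ge (|y - ν 0| / E)
  have hn' : |y - ν 0| ≤ E * n := by
    rw [div_le_iff₀ hE] at hn; linarith [hn]
  have h1 : ν (-(2*π*n)) ≤ y := by
    rw [hiter' n]; have := abs_le.1 hn'; linarith [this.1]
  have h2 : y ≤ ν (2*π*n) := by
    rw [hiter n]; have := abs_le.1 hn'; linarith [this.2]
  have hab : (-(2*π*n) : ℝ) ≤ 2*π*n := by
    have : (0:ℝ) ≤ 2*π*n := by positivity
    linarith
  obtain ⟨x, _, hx⟩ := intermediate_value_Icc hab hc.continuousOn ⟨h1, h2⟩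
  exact ⟨x, hx⟩

lemma sign_deriv (μ : ℝ → ℝ) (d : ℝ) (hd : d ≠ 0) (hμ : ContDiff ℝ (⊤ : ℕ∞) μ)
    (hne : ∀ θ, deriv μ θ ≠ 0) (hsh : μ (0 + 2*π) = μ 0 + 2*π*d) :
    ∀ θ, 0 < (if 0 < d then (1:ℝ) else -1) * deriv μ θ := by
  set ε : ℝ := if 0 < d then (1:ℝ) else -1 with hε
  have hcont : Continuous (deriv μ) := hμ.continuous_deriv (mod_cast le_top)
  have h2π : (0:ℝ) < 2*π := by positivity
  obtain ⟨c, _, hc⟩ := exists_deriv_eq_slope μ (by linarith : (0:ℝ) < 0 + 2*π)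
    hμ.continuous.continuousOn ((hμ.differentiable (by simp)).differentiableOn)
  have hcd : deriv μ c = d := by
    rw [hc, hsh]; field_simp; ring
  have hεd : 0 < ε * d := by
    rcases lt_or_gt_of_ne hd with h | h
    · rw [hε, if_neg (by linarith)]; nlinarith
    · rw [hε, if_pos h]; linarith
  intro θ
  by_contra hcon
  push_neg at hcon
  have hε1 : ε ≠ 0 := by rw [hε]; split <;> norm_num
  have hθ : ε * deriv μ θ < 0 := lt_of_le_of_ne hcon (by
    intro h
    exact hne θ ((mul_eq_zero.1 h).resolve_left hε1))
  have hmem : (0:ℝ) ∈ Set.uIcc (ε * deriv μ θ) (ε * deriv μ c) := by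
    rw [hcd]
    exact Set.mem_uIcc.2 (Or.inl ⟨le_of_lt hθ, le_of_lt hεd⟩)
  obtain ⟨x, _, hx⟩ := intermediate_value_uIcc
    ((continuous_const.mul hcont).continuousOn) hmem
  exact hne x ((mul_eq_zero.1 hx).resolve_left hε1)


/-- `f : ℝ → ℂ` (thought of as a map of `S¹ = ℝ/2πℤ` into `ℂ`) is a non-critical immersion
of Gauss degree `d`: `f' (θ) = ρ(θ) e^{iμ(θ)}` with `ρ > 0`, `μ' ≠ 0` everywhere, and
`μ(θ + 2π) = μ(θ) + 2πd`. -/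
def IsNonCritImmersion (f : ℝ → ℂ) (d : ℤ) : Prop :=
  ∃ ρ μ : ℝ → ℝ,
    ContDiff ℝ (⊤ : ℕ∞) f ∧ ContDiff ℝ (⊤ : ℕ∞) μ ∧
    (∀ θ, f (θ + 2 * π) = f θ) ∧
    (∀ θ, 0 < ρ θ) ∧
    (∀ θ, deriv f θ = ρ θ * Complex.exp (Complex.I * μ θ)) ∧
    (∀ θ, deriv μ θ ≠ 0) ∧
    (∀ θ, μ (θ + 2 * π) = μ θ + 2 * π * d)

lemma pack (f : ℝ → ℂ) (d : ℤ) (hd : d ≠ 0) (h : IsNonCritImmersion f d) :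
    ∃ ρ μ φ : ℝ → ℝ,
      ContDiff ℝ (⊤ : ℕ∞) f ∧ ContDiff ℝ (⊤ : ℕ∞) μ ∧
      (∀ θ, f (θ + 2 * π) = f θ) ∧
      (∀ θ, 0 < ρ θ) ∧
      (∀ θ, deriv f θ = ρ θ * Complex.exp (Complex.I * μ θ)) ∧
      (∀ θ, μ (θ + 2 * π) = μ θ + 2 * π * d) ∧
      (∀ θ, 0 < (if 0 < (d:ℝ) then (1:ℝ) else -1) * deriv μ θ) ∧
      ContDiff ℝ (⊤ : ℕ∞) φ ∧ (∀ x, φ (μ x) = x) ∧ (∀ u, μ (φ u) = u) ∧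
      (∀ u, φ (u + 2 * π * d) = φ u + 2 * π) ∧
      (∀ u, deriv μ (φ u) * deriv φ u = 1) := by
  obtain ⟨ρ, μ, hf, hμ, hper, hρ, hdf, hne, hsh⟩ := h
  set ε : ℝ := if 0 < (d:ℝ) then (1:ℝ) else -1 with hεdef
  have hεsq : ε * ε = 1 := by rw [hεdef]; split <;> norm_num
  have hsgn : ∀ θ, 0 < ε * deriv μ θ :=
    sign_deriv μ d (Int.cast_ne_zero.2 hd) hμ hne (hsh 0)
  -- the rescaled strictly increasing function
  set ν : ℝ → ℝ := fun x => ε * μ x with hνdef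
  have hν : ContDiff ℝ (⊤ : ℕ∞) ν := contDiff_const.mul hμ
  have hνd : ∀ x, deriv ν x = ε * deriv μ x := fun x =>
    deriv_const_mul ε ((hμ.differentiable (by simp)) x)
  have hνpos : ∀ x, 0 < deriv ν x := fun x => (hνd x) ▸ hsgn x
  have hνsh : ∀ x, ν (x + 2*π) = ν x + 2*π*(ε*d) := by
    intro x; simp only [hνdef]; rw [hsh]; ring
  have hEpos : 0 < 2*π*(ε*d) := by
    have : 0 < ε * d := by
      rcases lt_or_gt_of_ne (Int.cast_ne_zero.2 hd : (d:ℝ) ≠ 0) with hlt | hgt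
      · rw [hεdef, if_neg (by linarith)]; nlinarith
      · rw [hεdef, if_pos hgt]; linarith
    have := Real.pi_pos; nlinarith
  obtain ⟨ψ, hψ, hψl, hψr⟩ := smooth_inverse ν hν hνpos
    (surj_of_shift ν hν.continuous _ hEpos hνsh)
  have hmono : StrictMono ν := strictMono_of_deriv_pos hνpos
  set φ : ℝ → ℝ := fun u => ψ (ε * u) with hφdef
  have hφ : ContDiff ℝ (⊤ : ℕ∞) φ := hψ.comp (contDiff_const.mul contDiff_id)
  have hl : ∀ x, φ (μ x) = x := fun x => hψl x
  have hr : ∀ u, μ (φ u) = u := by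
    intro u
    have h1 : ν (ψ (ε * u)) = ε * u := hψr (ε * u)
    have h2 : ε * μ (ψ (ε * u)) = ε * u := h1
    have := mul_left_cancel₀ (by rw [hεdef]; split <;> norm_num : ε ≠ 0) h2
    simpa [hφdef] using this
  have hshiftφ : ∀ u, φ (u + 2 * π * d) = φ u + 2 * π := by
    intro u
    have hinj : Function.Injective μ := by
      intro a b hab
      exact hmono.injective (by simp only [hνdef, hab])
    apply hinj
    rw [hr, hsh, hr]
  have hchain : ∀ u, deriv μ (φ u) * deriv φ u = 1 := by
    intro u
    have hμd : HasDerivAt μ (deriv μ (φ u)) (φ u) :=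
      ((hμ.differentiable (by simp)) (φ u)).hasDerivAt
    have hφd : HasDerivAt φ (deriv φ u) u :=
      ((hφ.differentiable (by simp)) u).hasDerivAt
    have h1 : HasDerivAt (fun v => μ (φ v)) (deriv μ (φ u) * deriv φ u) u :=
      HasDerivAt.comp u hμd hφd
    have h2 : (fun v => μ (φ v)) = fun v => v := funext hr
    rw [h2] at h1
    exact h1.unique (hasDerivAt_id u)
  exact ⟨ρ, μ, φ, hf, hμ, hper, hρ, hdf, hsh, hsgn, hφ, hl, hr, hshiftφ, hchain⟩

/-- Non-critical refinement of the Whitney–Graustein theorem: two non-critical immersions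
`S¹ → ℂ` of the same Gauss degree `d ≠ 0` are regularly homotopic through non-critical
immersions. -/
theorem whitney_graustein_noncritical (f₀ f₁ : ℝ → ℂ) (d : ℤ) (hd : d ≠ 0)
    (h₀ : IsNonCritImmersion f₀ d) (h₁ : IsNonCritImmersion f₁ d) :
    ∃ F : ℝ → ℝ → ℂ,
      F 0 = f₀ ∧ F 1 = f₁ ∧
      ContDiff ℝ (⊤ : ℕ∞) (fun p : ℝ × ℝ => F p.1 p.2) ∧
      ∀ t ∈ Set.Icc (0 : ℝ) 1, IsNonCritImmersion (F t) d := by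
  obtain ⟨ρ₀, μ₀, φ₀, hf₀, hμ₀, hper₀, hρ₀, hdf₀, hsh₀, hsgn₀, hφ₀, hl₀, hr₀, hshφ₀, hch₀⟩ :=
    pack f₀ d hd h₀
  obtain ⟨ρ₁, μ₁, φ₁, hf₁, hμ₁, hper₁, hρ₁, hdf₁, hsh₁, hsgn₁, hφ₁, hl₁, hr₁, hshφ₁, hch₁⟩ :=
    pack f₁ d hd h₁
  set ε : ℝ := if 0 < (d:ℝ) then (1:ℝ) else -1 with hεdef
  have hεsq : ε * ε = 1 := by rw [hεdef]; split <;> norm_num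
  -- sign of deriv φ
  have hsφ₀ : ∀ u, 0 < ε * deriv φ₀ u := by
    intro u; have h1 := hch₀ u; have h2 := hsgn₀ (φ₀ u); nlinarith
  have hsφ₁ : ∀ u, 0 < ε * deriv φ₁ u := by
    intro u; have h1 := hch₁ u; have h2 := hsgn₁ (φ₁ u); nlinarith
  set m : ℝ → ℝ → ℝ := fun t θ => (1 - t) * μ₀ θ + t * μ₁ θ with hmdef
  refine ⟨fun t θ => ((1 - t : ℝ) : ℂ) * f₀ (φ₀ (m t θ)) + ((t : ℝ) : ℂ) * f₁ (φ₁ (m t θ)),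
    ?_, ?_, ?_, ?_⟩
  · funext θ; simp [hmdef, hl₀ θ]
  · funext θ; simp [hmdef, hl₁ θ]
  · -- joint smoothness
    have hm : ContDiff ℝ (⊤ : ℕ∞) (fun p : ℝ × ℝ => m p.1 p.2) := by
      apply ContDiff.add
      · exact (contDiff_const.sub contDiff_fst).mul (hμ₀.comp contDiff_snd)
      · exact contDiff_fst.mul (hμ₁.comp contDiff_snd)
    apply ContDiff.add
    · exact ((Complex.ofRealCLM.contDiff).comp (contDiff_const.sub contDiff_fst)).mul
        ((hf₀.comp hφ₀).comp hm)
    · exact ((Complex.ofRealCLM.contDiff).comp contDiff_fst).mul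
        ((hf₁.comp hφ₁).comp hm)
  · rintro t ⟨ht0, ht1⟩
    set u : ℝ → ℝ := fun θ => m t θ with hudef
    set dm : ℝ → ℝ := fun θ => (1 - t) * deriv μ₀ θ + t * deriv μ₁ θ with hdmdef
    have hmt : ContDiff ℝ (⊤ : ℕ∞) (m t) := by
      exact (contDiff_const.mul hμ₀).add (contDiff_const.mul hμ₁)
    have hmd : ∀ θ, HasDerivAt (m t) (dm θ) θ := by
      intro θ
      exact (((hμ₀.differentiable (by simp)) θ).hasDerivAt.const_mul (1 - t)).add
        (((hμ₁.differentiable (by simp)) θ).hasDerivAt.const_mul t)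
    have hdmpos : ∀ θ, 0 < ε * dm θ := by
      intro θ
      have a0 := hsgn₀ θ; have a1 := hsgn₁ θ
      simp only [hdmdef]
      nlinarith [mul_nonneg (sub_nonneg.2 ht1) (le_of_lt a0), mul_nonneg ht0 (le_of_lt a1)]
    refine ⟨fun θ => ((1 - t) * ρ₀ (φ₀ (u θ)) * deriv φ₀ (u θ)
        + t * ρ₁ (φ₁ (u θ)) * deriv φ₁ (u θ)) * dm θ, m t, ?_, hmt, ?_, ?_, ?_, ?_, ?_⟩
    · -- smoothness in θ
      exact (contDiff_const.mul ((hf₀.comp hφ₀).comp hmt)).add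
        (contDiff_const.mul ((hf₁.comp hφ₁).comp hmt))
    · -- periodicity
      intro θ
      have hms : m t (θ + 2 * π) = m t θ + 2 * π * d := by
        simp only [hmdef]; rw [hsh₀, hsh₁]; ring
      simp only [hms, hshφ₀, hshφ₁, hper₀, hper₁]
    · -- positivity of ρ
      intro θ
      have b0 := hsφ₀ (u θ); have b1 := hsφ₁ (u θ)
      have c0 := hρ₀ (φ₀ (u θ)); have c1 := hρ₁ (φ₁ (u θ))
      have hdm := hdmpos θ
      have hB : 0 < ε * ((1 - t) * ρ₀ (φ₀ (u θ)) * deriv φ₀ (u θ)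
          + t * ρ₁ (φ₁ (u θ)) * deriv φ₁ (u θ)) := by
        rcases eq_or_lt_of_le ht1 with h1 | h1
        · subst h1; nlinarith
        · nlinarith [mul_nonneg (mul_nonneg ht0 (le_of_lt c1)) (le_of_lt b1),
            mul_pos (mul_pos (sub_pos.2 h1) c0) b0]
      show 0 < ((1 - t) * ρ₀ (φ₀ (u θ)) * deriv φ₀ (u θ)
          + t * ρ₁ (φ₁ (u θ)) * deriv φ₁ (u θ)) * dm θ
      nlinarith [mul_pos hB hdm]
    · -- deriv equation
      intro θ
      have hφd₀ : HasDerivAt φ₀ (deriv φ₀ (u θ)) (u θ) :=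
        ((hφ₀.differentiable (by simp)) (u θ)).hasDerivAt
      have hφd₁ : HasDerivAt φ₁ (deriv φ₁ (u θ)) (u θ) :=
        ((hφ₁.differentiable (by simp)) (u θ)).hasDerivAt
      have hF₀ : HasDerivAt (fun θ' => f₀ (φ₀ (m t θ'))) 
          ((deriv φ₀ (u θ) * dm θ) • deriv f₀ (φ₀ (u θ))) θ := by
        have h1 : HasDerivAt (fun θ' => φ₀ (m t θ')) (deriv φ₀ (u θ) * dm θ) θ :=
          HasDerivAt.comp θ hφd₀ (hmd θ)
        have h2 : HasDerivAt f₀ (deriv f₀ (φ₀ (u θ))) (φ₀ (u θ)) :=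
          ((hf₀.differentiable (by simp)) (φ₀ (u θ))).hasDerivAt
        exact h2.scomp θ h1
      have hF₁ : HasDerivAt (fun θ' => f₁ (φ₁ (m t θ')))
          ((deriv φ₁ (u θ) * dm θ) • deriv f₁ (φ₁ (u θ))) θ := by
        have h1 : HasDerivAt (fun θ' => φ₁ (m t θ')) (deriv φ₁ (u θ) * dm θ) θ :=
          HasDerivAt.comp θ hφd₁ (hmd θ)
        have h2 : HasDerivAt f₁ (deriv f₁ (φ₁ (u θ))) (φ₁ (u θ)) :=
          ((hf₁.differentiable (by simp)) (φ₁ (u θ))).hasDerivAt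
        exact h2.scomp θ h1
      have hFt : HasDerivAt (fun θ' => ((1 - t : ℝ) : ℂ) * f₀ (φ₀ (m t θ'))
          + ((t : ℝ) : ℂ) * f₁ (φ₁ (m t θ')))
          (((1 - t : ℝ) : ℂ) * ((deriv φ₀ (u θ) * dm θ) • deriv f₀ (φ₀ (u θ)))
           + ((t : ℝ) : ℂ) * ((deriv φ₁ (u θ) * dm θ) • deriv f₁ (φ₁ (u θ)))) θ :=
        (hF₀.const_mul _).add (hF₁.const_mul _)
      rw [hFt.deriv]
      rw [hdf₀, hdf₁, hr₀, hr₁]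
      push_cast
      simp only [Complex.real_smul]
      push_cast
      ring
    · -- deriv μ_t ≠ 0
      intro θ
      have := hdmpos θ
      rw [(hmd θ).deriv]
      intro h; rw [h] at this; simp at this
    · -- shift of m t
      intro θ
      simp only [hmdef]; rw [hsh₀, hsh₁]; ring
end

section
/- Let ψ be a volume-preserving diffeomorphism of the torus Tⁿ (preserving dθ₁∧…∧dθₙ), with a lift θ* = ψ̃(θ) to ℝⁿ, and suppose k, k̂ are 2π-periodic real analytic functions of one variable with zero mean over [0,2π] such that θ₁* + k̂(θ₁*) = θ₁ + k(θ₁) for all θ, where 1 + k' > 0 and 1 + k̂' > 0. Then k̂ = k and the first component of ψ̃ is θ₁* = θ₁. -/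
open scoped Real
open MeasureTheory

private lemma nfu_tile {α : Type*} [MeasurableSpace α] (μ : Measure α)
    {ι : Type*} [Countable ι] (A B : ι → Set α)
    (hAm : ∀ i, MeasurableSet (A i)) (hBm : ∀ i, MeasurableSet (B i))
    (hAd : Pairwise (Function.onFun Disjoint A)) (hBd : Pairwise (Function.onFun Disjoint B))
    (hU : (⋃ i, A i) = ⋃ i, B i) (i₀ : ι) (σ : ι ≃ ι)
    (hσ : ∀ i, μ (A i₀ ∩ B i) = μ (B i₀ ∩ A (σ i))) :
    μ (A i₀) = μ (B i₀) := by
  have hA0 : A i₀ = ⋃ i, A i₀ ∩ B i := by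
    rw [← Set.inter_iUnion, ← hU]
    exact (Set.inter_eq_self_of_subset_left (Set.subset_iUnion A i₀)).symm
  have hB0 : B i₀ = ⋃ i, B i₀ ∩ A i := by
    rw [← Set.inter_iUnion, hU]
    exact (Set.inter_eq_self_of_subset_left (Set.subset_iUnion B i₀)).symm
  have h1 : μ (A i₀) = ∑' i, μ (A i₀ ∩ B i) := by
    conv_lhs => rw [hA0]
    exact measure_iUnion
      (fun i j hij => (hBd hij).mono Set.inter_subset_right Set.inter_subset_right)
      (fun i => (hAm i₀).inter (hBm i))
  have h2 : μ (B i₀) = ∑' i, μ (B i₀ ∩ A i) := by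
    conv_lhs => rw [hB0]
    exact measure_iUnion
      (fun i j hij => (hAd hij).mono Set.inter_subset_right Set.inter_subset_right)
      (fun i => (hBm i₀).inter (hAm i))
  rw [h1, h2]
  exact (tsum_congr hσ).trans (σ.tsum_eq fun i => μ (B i₀ ∩ A i))

private lemma nfu_ico (x : ℝ) (m : ℤ) :
    x + 2 * π * m ∈ Set.Ico (0:ℝ) (2 * π) ↔ m = -⌊x / (2 * π)⌋ := by
  have h2π : (0:ℝ) < 2 * π := by positivity
  constructor
  · rintro ⟨h1, h2⟩
    have hle : ((-m : ℤ) : ℝ) ≤ x / (2 * π) := by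
      rw [le_div_iff₀ h2π]
      push_cast
      linarith
    have hlt : x / (2 * π) < ((-m : ℤ) : ℝ) + 1 := by
      rw [div_lt_iff₀ h2π]
      push_cast
      linarith
    have : ⌊x / (2 * π)⌋ = -m := Int.floor_eq_iff.mpr ⟨hle, hlt⟩
    omega
  · rintro rfl
    have hfr : x + 2 * π * ((-⌊x / (2 * π)⌋ : ℤ) : ℝ) = 2 * π * Int.fract (x / (2 * π)) := by
      rw [Int.fract]
      push_cast
      field_simp
      ring
    rw [hfr]
    constructor
    · exact mul_nonneg h2π.le (Int.fract_nonneg _)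
    · calc 2 * π * Int.fract (x / (2 * π)) < 2 * π * 1 :=
            (mul_lt_mul_iff_right₀ h2π).mpr (Int.fract_lt_one _)
      _ = 2 * π := mul_one _

private lemma nfu_shift1 {n : ℕ} (φ : (Fin n → ℝ) → (Fin n → ℝ)) (D : Fin n → Fin n → ℤ)
    (hlift : ∀ (θ : Fin n → ℝ) (j : Fin n),
      φ (fun i => θ i + if i = j then 2 * π else 0) = fun l => φ θ l + 2 * π * (D l j)) :
    ∀ (m : ℤ) (j : Fin n) (θ : Fin n → ℝ),
      φ (fun i => θ i + if i = j then 2 * π * m else 0)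
        = fun l => φ θ l + 2 * π * m * (D l j) := by
  intro m
  induction m using Int.induction_on with
  | zero => intro j θ; simp
  | succ m ih =>
    intro j θ
    have h1 : (fun i => θ i + if i = j then 2 * π * ((m : ℤ) + 1 : ℤ) else 0)
        = fun i => (fun i' => θ i' + if i' = j then 2 * π * (m : ℤ) else 0) i
            + if i = j then 2 * π else 0 := by
      funext i
      by_cases h : i = j <;> simp [h]
      push_cast
      ring
    rw [h1, hlift, ih j θ]
    funext l
    push_cast
    ring
  | pred m ih =>
    intro j θ
    have h1 : (fun i => (fun i' => θ i' + if i' = j then 2 * π * ((-(m : ℤ) - 1 : ℤ)) else 0) i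
          + if i = j then 2 * π else 0)
        = fun i => θ i + if i = j then 2 * π * ((-(m : ℤ) : ℤ)) else 0 := by
      funext i
      by_cases h : i = j <;> simp [h]
      push_cast
      ring
    have h2 := hlift (fun i' => θ i' + if i' = j then 2 * π * ((-(m : ℤ) - 1 : ℤ)) else 0) j
    rw [h1, ih j θ] at h2
    funext l
    have h3 := congrFun h2 l
    have : φ (fun i' => θ i' + if i' = j then 2 * π * ((-(m : ℤ) - 1 : ℤ)) else 0) l
        = φ θ l + 2 * π * ((-(m : ℤ) : ℝ)) * (D l j) - 2 * π * (D l j) := by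
      push_cast at h3 ⊢
      linarith
    rw [this]
    push_cast
    ring

private lemma nfu_shift {n : ℕ} (φ : (Fin n → ℝ) → (Fin n → ℝ)) (D : Fin n → Fin n → ℤ)
    (hlift : ∀ (θ : Fin n → ℝ) (j : Fin n),
      φ (fun i => θ i + if i = j then 2 * π else 0) = fun l => φ θ l + 2 * π * (D l j)) :
    ∀ (v : Fin n → ℤ) (θ : Fin n → ℝ),
      φ (fun i => θ i + 2 * π * v i)
        = fun l => φ θ l + 2 * π * ((∑ j, D l j * v j : ℤ) : ℝ) := by
  intro v
  suffices H : ∀ (s : Finset (Fin n)) (θ : Fin n → ℝ),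
      φ (fun i => θ i + if i ∈ s then 2 * π * v i else 0)
        = fun l => φ θ l + 2 * π * ((∑ j ∈ s, D l j * v j : ℤ) : ℝ) by
    intro θ
    have := H Finset.univ θ
    simpa using this
  intro s
  induction s using Finset.induction_on with
  | empty => intro θ; simp
  | @insert a s ha ih =>
    intro θ
    have h1 : (fun i => θ i + if i ∈ insert a s then 2 * π * v i else 0)
        = fun i => (fun i' => θ i' + if i' ∈ s then 2 * π * v i' else 0) i
            + if i = a then 2 * π * (v a : ℤ) else 0 := by
      funext i
      by_cases h : i = a
      · subst h
        simp [ha]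
      · by_cases hs : i ∈ s <;> simp [h, hs]
    rw [h1, nfu_shift1 φ D hlift (v a) a, ih θ]
    funext l
    rw [Finset.sum_insert ha]
    push_cast
    ring

set_option maxHeartbeats 2000000 in
/-- Uniqueness of the normal form `θ₁ + k(θ₁)` under volume-preserving diffeomorphisms of the
torus: if `φ` is a lift of a volume-preserving diffeomorphism of `Tⁿ` and `k, k̂` are
`2π`-periodic real analytic functions with zero mean and `1 + k' > 0`, `1 + k̂' > 0` such that
`φ(θ)₁ + k̂(φ(θ)₁) = θ₁ + k(θ₁)` for all `θ`, then `k̂ = k` and `φ(θ)₁ = θ₁`. -/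
theorem normal_form_uniqueness (n : ℕ) (hn : 0 < n)
    (φ φinv : (Fin n → ℝ) → (Fin n → ℝ)) (D : Fin n → Fin n → ℤ)
    (k khat : ℝ → ℝ)
    (hφ : ContDiff ℝ (⊤ : ℕ∞) φ) (hφinv : ContDiff ℝ (⊤ : ℕ∞) φinv)
    (hinv : Function.LeftInverse φinv φ ∧ Function.RightInverse φinv φ)
    (hlift : ∀ (θ : Fin n → ℝ) (j : Fin n),
      φ (fun i => θ i + if i = j then 2 * π else 0)
        = fun l => φ θ l + 2 * π * (D l j))
    (hvol : ∀ θ, (fderiv ℝ φ θ).det = 1)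
    (hk : AnalyticOnNhd ℝ k Set.univ) (hkhat : AnalyticOnNhd ℝ khat Set.univ)
    (hkper : ∀ x, k (x + 2 * π) = k x) (hkhatper : ∀ x, khat (x + 2 * π) = khat x)
    (hkmean : ∫ x in (0:ℝ)..(2 * π), k x = 0)
    (hkhatmean : ∫ x in (0:ℝ)..(2 * π), khat x = 0)
    (hkpos : ∀ x, 0 < 1 + deriv k x) (hkhatpos : ∀ x, 0 < 1 + deriv khat x)
    (heq : ∀ θ : Fin n → ℝ,
      φ θ ⟨0, hn⟩ + khat (φ θ ⟨0, hn⟩) = θ ⟨0, hn⟩ + k (θ ⟨0, hn⟩)) :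
    khat = k ∧ ∀ θ : Fin n → ℝ, φ θ ⟨0, hn⟩ = θ ⟨0, hn⟩ := by
  have h2π : (0:ℝ) < 2 * π := by positivity
  set e : Fin n := ⟨0, hn⟩ with he
  -- basic differentiability
  have hdk : ∀ x, DifferentiableAt ℝ k x := fun x => (hk x trivial).differentiableAt
  have hdkhat : ∀ x, DifferentiableAt ℝ khat x := fun x => (hkhat x trivial).differentiableAt
  have hμmono : StrictMono (fun x => x + k x) := by
    apply strictMono_of_deriv_pos
    intro x
    rw [deriv_fun_add differentiableAt_fun_id (hdk x)]
    simpa using hkpos x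
  have hmuhmono : StrictMono (fun x => x + khat x) := by
    apply strictMono_of_deriv_pos
    intro x
    rw [deriv_fun_add differentiableAt_fun_id (hdkhat x)]
    simpa using hkhatpos x
  have hmuhinj : ∀ a b : ℝ, a + khat a = b + khat b → a = b := fun a b h => hmuhmono.injective h
  -- the function g
  set g : ℝ → ℝ := fun t => φ (fun _ => t) e with hg
  have hgμ : ∀ x, g x + khat (g x) = x + k x := fun x => heq (fun _ => x)
  have hgφ : ∀ θ : Fin n → ℝ, φ θ e = g (θ e) := by
    intro θ
    apply hmuhinj
    rw [heq θ, hgμ (θ e)]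
  have hgmono : StrictMono g := by
    intro a b hab
    have h := hμmono hab
    rw [← hmuhmono.lt_iff_lt]
    show g a + khat (g a) < g b + khat (g b)
    rw [hgμ, hgμ]
    exact h
  have hgper : ∀ x, g (x + 2 * π) = g x + 2 * π := by
    intro x
    apply hmuhinj
    show g (x + 2 * π) + khat (g (x + 2 * π)) = (g x + 2 * π) + khat (g x + 2 * π)
    rw [hgμ (x + 2 * π), hkper, hkhatper]
    linarith [hgμ x]
  have hφinj : Function.Injective φ := hinv.1.injective
  have himg : ∀ s : Set (Fin n → ℝ), φ '' s = φinv ⁻¹' s := by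
    intro s
    ext y
    constructor
    · rintro ⟨x, hx, rfl⟩
      rwa [Set.mem_preimage, hinv.1 x]
    · intro hy
      exact ⟨φinv y, hy, hinv.2 y⟩
  have hshift := nfu_shift φ D hlift
  have hDe : ∀ j, j ≠ e → D e j = 0 := by
    intro j hj
    have h := congrFun (hlift (fun _ => 0) j) e
    rw [hgφ, hgφ] at h
    have hej : ¬ (e = j) := fun hc => hj hc.symm
    simp only [hej, if_false, ite_false] at h
    norm_num at h
    exact_mod_cast h
  classical
  set MZ : Matrix (Fin n) (Fin n) ℤ :=
    (fun l j => if l = e ∨ j = e then (if l = j then 1 else 0) else D l j) with hMZ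
  have hMZdet : MZ.det ≠ 0 := by
    intro hdet
    obtain ⟨v, hv0, hvz⟩ := Matrix.exists_mulVec_eq_zero_iff.mpr hdet
    have hsum : ∀ l, (∑ j, MZ l j * v j) = 0 := by
      intro l
      have h := congrFun hvz l
      simpa [Matrix.mulVec, dotProduct] using h
    have hve : v e = 0 := by
      have h := hsum e
      rw [Finset.sum_eq_single e (fun b _ hb => by
        have heb : ¬ (e = b) := fun hc => hb hc.symm
        simp [hMZ, heb]) (by simp)] at h
      simpa [hMZ] using h
    have hall : ∀ l, (∑ j, D l j * v j) = 0 := by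
      intro l
      by_cases hl : l = e
      · subst hl
        apply Finset.sum_eq_zero
        intro j _
        by_cases hj : j = e
        · rw [hj, hve, mul_zero]
        · rw [hDe j hj, zero_mul]
      · rw [← hsum l]
        apply Finset.sum_congr rfl
        intro j _
        by_cases hj : j = e
        · subst hj
          rw [hve, mul_zero, mul_zero]
        · simp [hMZ, hl, hj]
    have hzero : (fun i => (0 : Fin n → ℝ) i + 2 * π * v i) = (0 : Fin n → ℝ) := by
      apply hφinj
      rw [hshift v 0]
      funext l
      simp [hall l]
    obtain ⟨i, hi⟩ := Function.ne_iff.mp hv0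
    have h2 := congrFun hzero i
    simp only [Pi.zero_apply, zero_add] at h2
    have hπ : (2:ℝ) * π ≠ 0 := ne_of_gt h2π
    have : ((v i : ℤ) : ℝ) = 0 := (mul_eq_zero.mp h2).resolve_left hπ
    exact hi (by exact_mod_cast this)
  set MR : Matrix (Fin n) (Fin n) ℝ := MZ.map (Int.cast : ℤ → ℝ) with hMR
  have hMRdet : MR.det = ((MZ.det : ℤ) : ℝ) := (RingHom.map_det (Int.castRingHom ℝ) MZ).symm
  have hMRdet0 : MR.det ≠ 0 := by
    rw [hMRdet]
    exact_mod_cast hMZdet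
  set ℓ : (Fin n → ℝ) →ₗ[ℝ] (Fin n → ℝ) := Matrix.toLin' MR with hℓdef
  have hℓdet : LinearMap.det ℓ = MR.det := LinearMap.det_toLin' MR
  have hℓdet0 : LinearMap.det ℓ ≠ 0 := by rw [hℓdet]; exact hMRdet0
  set Le : (Fin n → ℝ) ≃ₗ[ℝ] (Fin n → ℝ) := LinearMap.equivOfDetNeZero ℓ hℓdet0 with hLedef
  have hLeℓ : ∀ x, Le x = ℓ x := fun x => rfl
  have hℓe : ∀ x : Fin n → ℝ, ℓ x e = x e := by
    intro x
    rw [hℓdef, Matrix.toLin'_apply]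
    show ∑ j, MR e j * x j = x e
    rw [Finset.sum_eq_single e (fun b _ hb => by
      have heb : ¬ (e = b) := fun hc => hb hc.symm
      rw [hMR, Matrix.map_apply]; simp [hMZ, heb]) (by simp)]
    rw [hMR, Matrix.map_apply]; simp [hMZ]
  have hLese : ∀ x : Fin n → ℝ, Le.symm x e = x e := by
    intro x
    have h := hℓe (Le.symm x)
    rw [← hLeℓ, Le.apply_symm_apply] at h
    exact h.symm
  -- integer translation vectors
  set emb : ({j : Fin n // j ≠ e} → ℤ) → (Fin n → ℤ) :=
    (fun v i => if h : i = e then 0 else v ⟨i, h⟩) with hemb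
  set iv : ({j : Fin n // j ≠ e} → ℤ) → (Fin n → ℝ) :=
    (fun v i => 2 * π * (emb v i : ℤ)) with hiv
  set cc : ({j : Fin n // j ≠ e} → ℤ) → (Fin n → ℝ) :=
    (fun v l => 2 * π * ((∑ j, D l j * emb v j : ℤ) : ℝ)) with hcc
  have hembe : ∀ v, emb v e = 0 := fun v => dif_pos rfl
  have hive : ∀ v, iv v e = 0 := by
    intro v
    rw [hiv]
    simp [hembe v]
  have hembneg : ∀ v, emb (-v) = fun i => -(emb v i) := by
    intro v
    funext i
    by_cases h : i = e <;> simp [hemb, h]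
  have hccneg : ∀ v, cc (-v) = -(cc v) := by
    intro v
    funext l
    rw [hcc]
    show 2 * π * ((∑ j, D l j * emb (-v) j : ℤ) : ℝ) = -(2 * π * ((∑ j, D l j * emb v j : ℤ) : ℝ))
    rw [hembneg v]
    have hsn : (∑ j, D l j * (-(emb v j)) : ℤ) = -(∑ j, D l j * emb v j) := by
      rw [← Finset.sum_neg_distrib]
      exact Finset.sum_congr rfl fun j _ => by ring
    rw [hsn]
    push_cast
    ring
  have hφs : ∀ v θ, φ (θ + iv v) = φ θ + cc v := fun v θ => hshift (emb v) θ
  have hφis : ∀ v θ, φinv (θ + cc v) = φinv θ + iv v := by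
    intro v θ
    apply hφinj
    rw [hinv.2 (θ + cc v), hφs v (φinv θ), hinv.2 θ]
  have hcce : ∀ v, cc v e = 0 := by
    intro v
    have hz : (∑ j, D e j * emb v j : ℤ) = 0 := Finset.sum_eq_zero fun j _ => by
      by_cases hj : j = e
      · rw [hj, hembe, mul_zero]
      · rw [hDe j hj, zero_mul]
    show 2 * π * ((∑ j, D e j * emb v j : ℤ) : ℝ) = 0
    rw [hz]
    simp
  have hcc0 : cc 0 = 0 := by
    funext l
    show 2 * π * ((∑ j, D l j * emb 0 j : ℤ) : ℝ) = 0
    have hz : (∑ j, D l j * emb 0 j : ℤ) = 0 := Finset.sum_eq_zero fun j _ => by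
      by_cases hj : j = e <;> simp [hemb, hj]
    rw [hz]
    simp
  have hivval : ∀ v (j : Fin n) (hj : j ≠ e), iv v j = 2 * π * ((v ⟨j, hj⟩ : ℤ) : ℝ) := by
    intro v j hj
    simp [hiv, hemb, dif_neg hj]
  have hℓiv : ∀ v, ℓ (iv v) = cc v := by
    intro v
    funext l
    by_cases hl : l = e
    · rw [hl, hℓe, hive, hcce]
    · rw [hℓdef, Matrix.toLin'_apply]
      show ∑ j, MR l j * iv v j = cc v l
      have hterm : ∀ j, MR l j * iv v j = 2 * π * ((D l j * emb v j : ℤ) : ℝ) := by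
        intro j
        by_cases hj : j = e
        · subst hj
          rw [hive, hembe]
          push_cast
          ring
        · have h1 : MR l j = ((D l j : ℤ) : ℝ) := by rw [hMR, Matrix.map_apply]; simp [hMZ, hl, hj]
          have h2 : iv v j = 2 * π * ((emb v j : ℤ) : ℝ) := rfl
          rw [h1, h2]
          push_cast
          ring
      rw [Finset.sum_congr rfl (fun j _ => hterm j)]
      show _ = 2 * π * ((∑ j, D l j * emb v j : ℤ) : ℝ)
      rw [← Finset.mul_sum]
      push_cast
      ring
  have hLesc : ∀ v, Le.symm (cc v) = iv v := by
    intro v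
    rw [← hℓiv v, ← hLeℓ, Le.symm_apply_apply]
  -- the key measure-theoretic step
  have key : ∀ t : ℝ, 0 < t → t = |MR.det| * (g t - g 0) := by
    intro t ht
    set Box : ℝ → ℝ → Set (Fin n → ℝ) := fun a b =>
      Set.univ.pi fun i => Set.Ico (if i = e then a else 0) (if i = e then b else 2 * π)
      with hBox
    have hBoxm : ∀ a b, MeasurableSet (Box a b) :=
      fun a b => MeasurableSet.univ_pi fun i => measurableSet_Ico
    set m := (Finset.univ.erase e).card with hm
    have hBoxμ : ∀ a b : ℝ, volume (Box a b)
        = ENNReal.ofReal (b - a) * ENNReal.ofReal (2 * π) ^ m := by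
      intro a b
      rw [hBox]
      rw [volume_pi_pi]
      rw [← Finset.mul_prod_erase Finset.univ _ (Finset.mem_univ e)]
      rw [if_pos rfl, if_pos rfl, Real.volume_Ico]
      congr 1
      have hfac : ∀ i ∈ Finset.univ.erase e,
          volume (Set.Ico (if i = e then a else 0) (if i = e then b else 2 * π))
            = ENNReal.ofReal (2 * π) := by
        intro i hi
        rw [if_neg (Finset.ne_of_mem_erase hi), if_neg (Finset.ne_of_mem_erase hi),
          Real.volume_Ico, sub_zero]
      rw [Finset.prod_congr rfl hfac, Finset.prod_const]
    set E₀ : Set (Fin n → ℝ) := φinv ⁻¹' (Box 0 t) with hE₀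
    set F₀ : Set (Fin n → ℝ) := Le.symm ⁻¹' (Box (g 0) (g t)) with hF₀
    set A : ({j : Fin n // j ≠ e} → ℤ) → Set (Fin n → ℝ) :=
      fun v => (fun θ => cc v + θ) ⁻¹' E₀ with hA
    set B : ({j : Fin n // j ≠ e} → ℤ) → Set (Fin n → ℝ) :=
      fun v => (fun θ => cc v + θ) ⁻¹' F₀ with hB
    have hA0 : A 0 = E₀ := by
      show (fun θ => cc 0 + θ) ⁻¹' E₀ = E₀
      rw [hcc0]
      ext θ
      show (0 : Fin n → ℝ) + θ ∈ E₀ ↔ θ ∈ E₀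
      rw [zero_add]
    have hB0 : B 0 = F₀ := by
      show (fun θ => cc 0 + θ) ⁻¹' F₀ = F₀
      rw [hcc0]
      ext θ
      show (0 : Fin n → ℝ) + θ ∈ F₀ ↔ θ ∈ F₀
      rw [zero_add]
    have hAmem : ∀ v θ, θ ∈ A v ↔
        ∀ i, φinv θ i + iv v i ∈ Set.Ico (0:ℝ) (if i = e then t else 2 * π) := by
      intro v θ
      show φinv (cc v + θ) ∈ Box 0 t ↔ _
      rw [add_comm (cc v) θ, hφis v θ, hBox]
      rw [Set.mem_univ_pi]
      simp only [Pi.add_apply, ite_self]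
    have hBmem : ∀ v θ, θ ∈ B v ↔
        ∀ i, iv v i + Le.symm θ i
          ∈ Set.Ico (if i = e then g 0 else 0) (if i = e then g t else 2 * π) := by
      intro v θ
      show Le.symm (cc v + θ) ∈ Box (g 0) (g t) ↔ _
      rw [map_add, hLesc v, hBox, Set.mem_univ_pi]
      simp only [Pi.add_apply]
    have hAval : ∀ v θ, θ ∈ A v → ∀ (j : Fin n) (hj : j ≠ e),
        v ⟨j, hj⟩ = -⌊φinv θ j / (2 * π)⌋ := by
      intro v θ hθ j hj
      have h := (hAmem v θ).mp hθ j
      rw [if_neg hj, hivval v j hj] at h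
      exact (nfu_ico _ _).mp h
    have hBval : ∀ v θ, θ ∈ B v → ∀ (j : Fin n) (hj : j ≠ e),
        v ⟨j, hj⟩ = -⌊Le.symm θ j / (2 * π)⌋ := by
      intro v θ hθ j hj
      have h := (hBmem v θ).mp hθ j
      rw [if_neg hj, if_neg hj, hivval v j hj, add_comm] at h
      exact (nfu_ico _ _).mp h
    have hAd : Pairwise (Function.onFun Disjoint A) := by
      intro v v' hne
      rw [Function.onFun, Set.disjoint_left]
      intro θ hθ hθ'
      apply hne
      funext j
      exact (hAval v θ hθ j.1 j.2).trans (hAval v' θ hθ' j.1 j.2).symm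
    have hBd : Pairwise (Function.onFun Disjoint B) := by
      intro v v' hne
      rw [Function.onFun, Set.disjoint_left]
      intro θ hθ hθ'
      apply hne
      funext j
      exact (hBval v θ hθ j.1 j.2).trans (hBval v' θ hθ' j.1 j.2).symm
    have hgIco : ∀ x : ℝ, x ∈ Set.Ico (0:ℝ) t ↔ g x ∈ Set.Ico (g 0) (g t) := by
      intro x
      constructor
      · rintro ⟨h1, h2⟩
        exact ⟨hgmono.le_iff_le.mpr h1, hgmono h2⟩
      · rintro ⟨h1, h2⟩
        exact ⟨hgmono.le_iff_le.mp h1, hgmono.lt_iff_lt.mp h2⟩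
    have hθe : ∀ θ : Fin n → ℝ, θ e = g (φinv θ e) := by
      intro θ
      rw [← hgφ (φinv θ), hinv.2 θ]
    have hAU : (⋃ v, A v) = {θ : Fin n → ℝ | θ e ∈ Set.Ico (g 0) (g t)} := by
      ext θ
      simp only [Set.mem_iUnion, Set.mem_setOf_eq]
      constructor
      · rintro ⟨v, hv⟩
        have h := (hAmem v θ).mp hv e
        rw [if_pos rfl, hive v, add_zero] at h
        rw [hθe θ]
        exact (hgIco _).mp h
      · intro hθ
        obtain ⟨vv, hvv⟩ : ∃ vv : {j : Fin n // j ≠ e} → ℤ,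
            vv = fun j => -⌊φinv θ j.1 / (2 * π)⌋ := ⟨_, rfl⟩
        have hmem : ∀ i, φinv θ i + iv vv i
            ∈ Set.Ico (0:ℝ) (if i = e then t else 2 * π) := by
          intro i
          by_cases hi : i = e
          · subst hi
            rw [if_pos rfl, hive, add_zero]
            have hθ' : g (φinv θ e) ∈ Set.Ico (g 0) (g t) := by
              rw [← hθe θ]; exact hθ
            exact (hgIco _).mpr hθ'
          · rw [if_neg hi, hivval vv i hi]
            apply (nfu_ico _ _).mpr
            rw [hvv]
        exact ⟨vv, (hAmem vv θ).mpr hmem⟩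
    have hBU : (⋃ v, B v) = {θ : Fin n → ℝ | θ e ∈ Set.Ico (g 0) (g t)} := by
      ext θ
      simp only [Set.mem_iUnion, Set.mem_setOf_eq]
      constructor
      · rintro ⟨v, hv⟩
        have h := (hBmem v θ).mp hv e
        rw [if_pos rfl, if_pos rfl, hive v, zero_add, hLese] at h
        exact h
      · intro hθ
        obtain ⟨vv, hvv⟩ : ∃ vv : {j : Fin n // j ≠ e} → ℤ,
            vv = fun j => -⌊Le.symm θ j.1 / (2 * π)⌋ := ⟨_, rfl⟩
        have hmem : ∀ i, iv vv i + Le.symm θ i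
            ∈ Set.Ico (if i = e then g 0 else 0) (if i = e then g t else 2 * π) := by
          intro i
          by_cases hi : i = e
          · subst hi
            rw [if_pos rfl, if_pos rfl, hive, zero_add, hLese]
            exact hθ
          · rw [if_neg hi, if_neg hi, hivval vv i hi, add_comm]
            apply (nfu_ico _ _).mpr
            rw [hvv]
        exact ⟨vv, (hBmem vv θ).mpr hmem⟩
    have hφinvc : Continuous φinv := hφinv.continuous
    have hLesymc : Continuous (⇑Le.symm) :=
      (Le.symm : (Fin n → ℝ) →ₗ[ℝ] (Fin n → ℝ)).continuous_of_finiteDimensional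
    have hAm : ∀ v, MeasurableSet (A v) := fun v =>
      ((hBoxm 0 t).preimage hφinvc.measurable).preimage
        ((continuous_const.add continuous_id).measurable)
    have hBm : ∀ v, MeasurableSet (B v) := fun v =>
      ((hBoxm (g 0) (g t)).preimage hLesymc.measurable).preimage
        ((continuous_const.add continuous_id).measurable)
    have htrans : ∀ (d : Fin n → ℝ) (S : Set (Fin n → ℝ)),
        volume ((fun θ => d + θ) ⁻¹' S) = volume S :=
      fun d S => measure_preimage_add volume d S
    have hσ : ∀ v, volume (A 0 ∩ B v) = volume (B 0 ∩ A ((Equiv.neg _) v)) := by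
      intro v
      rw [hA0, hB0]
      have hset : (fun θ => (-(cc v)) + θ) ⁻¹' (E₀ ∩ B v) = A (-v) ∩ F₀ := by
        ext θ
        show (-(cc v) + θ ∈ E₀ ∧ cc v + (-(cc v) + θ) ∈ F₀) ↔ (cc (-v) + θ ∈ E₀ ∧ θ ∈ F₀)
        rw [hccneg v, add_neg_cancel_left]
      calc volume (E₀ ∩ B v)
          = volume ((fun θ => (-(cc v)) + θ) ⁻¹' (E₀ ∩ B v)) := (htrans _ _).symm
        _ = volume (A (-v) ∩ F₀) := by rw [hset]
        _ = volume (F₀ ∩ A ((Equiv.neg _) v)) := by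
            rw [Equiv.neg_apply, Set.inter_comm]
    have hMain : volume (A 0) = volume (B 0) :=
      nfu_tile volume A B hAm hBm hAd hBd (hAU.trans hBU.symm) 0 (Equiv.neg _) hσ
    have hEμ : volume E₀ = volume (Box 0 t) := by
      have h1 := lintegral_abs_det_fderiv_eq_addHaar_image volume (hBoxm 0 t)
        (fun x (_ : x ∈ Box 0 t) =>
          ((hφ.differentiable (by simp)) x).hasFDerivAt.hasFDerivWithinAt)
        hφinj.injOn
      rw [himg] at h1
      show volume (φinv ⁻¹' (Box 0 t)) = volume (Box 0 t)
      rw [← h1]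
      simp only [hvol, abs_one, ENNReal.ofReal_one]
      exact setLIntegral_one _
    have hFim : (⇑ℓ) '' (Box (g 0) (g t)) = F₀ := by
      ext y
      constructor
      · rintro ⟨x, hx, rfl⟩
        show Le.symm (ℓ x) ∈ Box (g 0) (g t)
        rw [← hLeℓ, Le.symm_apply_apply]
        exact hx
      · intro hy
        exact ⟨Le.symm y, hy, by rw [← hLeℓ, Le.apply_symm_apply]⟩
    have hFμ : volume F₀ = ENNReal.ofReal |MR.det| * volume (Box (g 0) (g t)) := by
      rw [← hFim, Measure.addHaar_image_linearMap, hℓdet]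
    have hgle : g 0 ≤ g t := hgmono.le_iff_le.mpr ht.le
    have hEq : ENNReal.ofReal (t - 0) * ENNReal.ofReal (2 * π) ^ m
        = ENNReal.ofReal |MR.det|
            * (ENNReal.ofReal (g t - g 0) * ENNReal.ofReal (2 * π) ^ m) := by
      calc ENNReal.ofReal (t - 0) * ENNReal.ofReal (2 * π) ^ m
          = volume (Box 0 t) := (hBoxμ 0 t).symm
        _ = volume E₀ := hEμ.symm
        _ = volume (A 0) := by rw [hA0]
        _ = volume (B 0) := hMain
        _ = volume F₀ := by rw [hB0]
        _ = ENNReal.ofReal |MR.det| * volume (Box (g 0) (g t)) := hFμ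
        _ = _ := by rw [hBoxμ (g 0) (g t)]
    have hQ1 : ENNReal.ofReal (t * (2 * π) ^ m)
        = ENNReal.ofReal (|MR.det| * ((g t - g 0) * (2 * π) ^ m)) := by
      rw [ENNReal.ofReal_mul ht.le, ENNReal.ofReal_mul (abs_nonneg _),
        ENNReal.ofReal_mul (sub_nonneg.mpr hgle),
        ENNReal.ofReal_pow (by positivity : (0:ℝ) ≤ 2 * π)]
      rw [sub_zero] at hEq
      exact hEq
    have hreal : t * (2 * π) ^ m = |MR.det| * ((g t - g 0) * (2 * π) ^ m) :=
      (ENNReal.ofReal_eq_ofReal_iff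
        (by positivity)
        (mul_nonneg (abs_nonneg _)
          (mul_nonneg (sub_nonneg.mpr hgle) (by positivity)))).mp hQ1
    have hp : (0:ℝ) < (2 * π) ^ m := by positivity
    exact mul_right_cancel₀ (ne_of_gt hp) (by linear_combination hreal)
  -- conclude that g is a translation
  have hg2π : g (2 * π) = g 0 + 2 * π := by
    have h := hgper 0
    rwa [zero_add] at h
  have hdet1 : |MR.det| = 1 := by
    have h := key (2 * π) h2π
    rw [hg2π] at h
    have h2 : |MR.det| * (2 * π) = 1 * (2 * π) := by linarith
    exact mul_right_cancel₀ (ne_of_gt h2π) h2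
  have hglin : ∀ x : ℝ, g x = x + g 0 := by
    have hperN : ∀ (N : ℕ) (y : ℝ), g (y + 2 * π * N) = g y + 2 * π * N := by
      intro N
      induction N with
      | zero => intro y; simp
      | succ N ih =>
        intro y
        have h1 : y + 2 * π * ((N:ℕ) + 1 : ℕ) = (y + 2 * π * N) + 2 * π := by
          push_cast
          ring
        rw [h1, hgper, ih y]
        push_cast
        ring
    intro x
    obtain ⟨N, hN⟩ := exists_nat_gt (-x / (2 * π))
    have hpos : 0 < x + 2 * π * N := by
      have h1 : -x / (2 * π) * (2 * π) < N * (2 * π) :=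
        mul_lt_mul_of_pos_right hN h2π
      rw [div_mul_cancel₀ _ (ne_of_gt h2π)] at h1
      linarith
    have h := key (x + 2 * π * N) hpos
    rw [hdet1, one_mul, hperN N x] at h
    linarith
  -- the mean-zero conditions force g 0 = 0
  have hkey : ∀ x : ℝ, khat (x + g 0) = k x - g 0 := by
    intro x
    have h := hgμ x
    rw [hglin x] at h
    linarith
  have hc0 : g 0 = 0 := by
    have hkhatc : Continuous khat := by
      have : Differentiable ℝ khat := fun x => hdkhat x
      exact this.continuous
    have hkc : Continuous k := by
      have : Differentiable ℝ k := fun x => hdk x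
      exact this.continuous
    have hint : (∫ x in (0:ℝ)..(2 * π), khat (x + g 0)) = 0 := by
      rw [intervalIntegral.integral_comp_add_right (fun y => khat y) (g 0)]
      have hper : Function.Periodic khat (2 * π) := hkhatper
      have h1 := hper.intervalIntegral_add_eq (g 0) 0
      rw [zero_add] at h1
      rw [show (0:ℝ) + g 0 = g 0 by ring, show 2 * π + g 0 = g 0 + 2 * π by ring]
      rw [h1]
      exact hkhatmean
    have hint2 : (∫ x in (0:ℝ)..(2 * π), (k x - g 0)) = -(2 * π * g 0) := by
      rw [intervalIntegral.integral_sub (hkc.intervalIntegrable 0 (2 * π))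
        (intervalIntegrable_const)]
      rw [hkmean, intervalIntegral.integral_const]
      simp only [smul_eq_mul, sub_zero, zero_sub]
    have hfg : (fun x => khat (x + g 0)) = fun x => k x - g 0 := funext hkey
    rw [hfg, hint2] at hint
    have h4 : 2 * π * g 0 = 0 := by linarith
    rcases mul_eq_zero.mp h4 with h | h
    · exact absurd h (ne_of_gt h2π)
    · exact h
  constructor
  · funext x
    have h := hkey x
    rw [hc0, add_zero, sub_zero] at h
    exact h
  · intro θ
    rw [hgφ θ, hglin, hc0, add_zero]
end

section
/- Fix 0 < r < 1, set r_m = (1/2)(1 + 1/(m+1))r and δ_m = 1/(4(m+2)²). Let c₄ ≥ 1 be a constant and c₆ = max{n·c₂, 27c₄} for constants c₂, n ≥ 1. Suppose nonnegative sequences (b_m), (B_m) satisfy b_{m+1} ≤ c₄ b_m²/(r_m³δ_m³) and B_{m+1} ≤ B_m + c₄ b_m²/(r_m⁴δ_m⁴) for 0 ≤ m < N, with B₀ ≤ 1/4 and b₀ ≤ r₀³δ₀³/c₆. Then for all 0 ≤ m ≤ N: b_m ≤ r_m³δ_m³/c₆ and B_m ≤ 1/2. -/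
open scoped Real

set_option maxHeartbeats 1600000 in
/-- The numerical convergence lemma (Lemma 4.2) underlying the KAM iteration. -/
theorem kam_numerical_lemma (n c₂ c₄ : ℝ) (hn : 1 ≤ n) (hc₂ : 1 ≤ c₂) (hc₄ : 1 ≤ c₄)
    (r : ℝ) (hr0 : 0 < r) (hr1 : r < 1)
    (rs δs : ℕ → ℝ)
    (hrs : ∀ m, rs m = (1 / 2) * (1 + 1 / (m + 1)) * r)
    (hδs : ∀ m, δs m = 1 / (4 * (m + 2) ^ 2))
    (c₆ : ℝ) (hc₆ : c₆ = max (n * c₂) (27 * c₄))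
    (N : ℕ) (b B : ℕ → ℝ)
    (hb0 : ∀ m, 0 ≤ b m) (hB0 : ∀ m, 0 ≤ B m)
    (hrec_b : ∀ m < N, b (m + 1) ≤ c₄ * (b m) ^ 2 / (rs m ^ 3 * δs m ^ 3))
    (hrec_B : ∀ m < N, B (m + 1) ≤ B m + c₄ * (b m) ^ 2 / (rs m ^ 4 * δs m ^ 4))
    (hB_init : B 0 ≤ 1 / 4) (hb_init : b 0 ≤ rs 0 ^ 3 * δs 0 ^ 3 / c₆) :
    ∀ m ≤ N, b m ≤ rs m ^ 3 * δs m ^ 3 / c₆ ∧ B m ≤ 1 / 2 := by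
  have hc₄0 : (0:ℝ) < c₄ := by linarith
  have hc₆c₄ : 27 * c₄ ≤ c₆ := hc₆ ▸ le_max_right _ _
  have hc₆27 : (27:ℝ) ≤ c₆ := le_trans (by linarith) hc₆c₄
  have hc₆pos : (0:ℝ) < c₆ := by linarith
  have hprod : ∀ m : ℕ, rs m * δs m = r / (8 * ((m:ℝ) + 1) * ((m:ℝ) + 2)) := by
    intro m
    have h1 : ((m:ℝ) + 1) ≠ 0 := by positivity
    have h2 : ((m:ℝ) + 2) ≠ 0 := by positivity
    rw [hrs, hδs]
    field_simp
    ring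
  have hPpos : ∀ m : ℕ, 0 < rs m * δs m := by
    intro m; rw [hprod]; positivity
  have main : ∀ m, m ≤ N → b m ≤ rs m ^ 3 * δs m ^ 3 / c₆ ∧
      B m ≤ 1 / 2 - 1 / (4 * ((m:ℝ) + 2)) := by
    intro m
    induction m with
    | zero =>
      intro _
      refine ⟨hb_init, ?_⟩
      norm_num
      linarith
    | succ m ih =>
      intro hm
      have hmN : m < N := hm
      obtain ⟨hbm, hBm⟩ := ih hmN.le
      set P := rs m * δs m with hPdef
      set Q := rs (m+1) * δs (m+1) with hQdef
      have hP : 0 < P := hPpos m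
      have hQ : 0 < Q := hPpos (m+1)
      have hx : (0:ℝ) ≤ (m:ℝ) := Nat.cast_nonneg m
      have ePm : rs m ^ 3 * δs m ^ 3 = P ^ 3 := (mul_pow _ _ 3).symm
      have eQm : rs (m+1) ^ 3 * δs (m+1) ^ 3 = Q ^ 3 := (mul_pow _ _ 3).symm
      have eP4 : rs m ^ 4 * δs m ^ 4 = P ^ 4 := (mul_pow _ _ 4).symm
      have hbm' : b m ≤ P ^ 3 / c₆ := by rw [← ePm]; exact hbm
      have hPQ : P ≤ 3 * Q := by
        rw [hPdef, hQdef, hprod, hprod]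
        push_cast
        rw [← mul_div_assoc, div_le_div_iff₀ (by positivity) (by positivity)]
        nlinarith [mul_nonneg (mul_nonneg hr0.le hx) (by linarith : (0:ℝ) ≤ (m:ℝ) + 2)]
      have hP3 : P ^ 3 ≤ 27 * Q ^ 3 := by
        calc P ^ 3 ≤ (3 * Q) ^ 3 := pow_le_pow_left₀ hP.le hPQ 3
        _ = 27 * Q ^ 3 := by ring
      constructor
      · calc b (m+1) ≤ c₄ * (b m) ^ 2 / (rs m ^ 3 * δs m ^ 3) := hrec_b m hmN
          _ = c₄ * (b m) ^ 2 / P ^ 3 := by rw [ePm]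
          _ ≤ c₄ * (P ^ 3 / c₆) ^ 2 / P ^ 3 := by
              gcongr
              exact hb0 m
          _ = c₄ * P ^ 3 / c₆ ^ 2 := by field_simp
          _ ≤ Q ^ 3 / c₆ := by
              rw [div_le_div_iff₀ (by positivity) hc₆pos]
              have h1 : c₄ * P ^ 3 ≤ c₆ * Q ^ 3 := by
                nlinarith [mul_le_mul_of_nonneg_left hP3 hc₄0.le,
                  mul_le_mul_of_nonneg_right hc₆c₄ (pow_nonneg hQ.le 3)]
              nlinarith [mul_le_mul_of_nonneg_right h1 hc₆pos.le]
          _ = rs (m+1) ^ 3 * δs (m+1) ^ 3 / c₆ := by rw [eQm]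
      · have hPle : P ≤ 1 / (8 * ((m:ℝ) + 2)) := by
          rw [hPdef, hprod, div_le_div_iff₀ (by positivity) (by positivity)]
          have h1 : r * (8 * ((m:ℝ) + 2)) ≤ 1 * (8 * ((m:ℝ) + 2)) :=
            mul_le_mul_of_nonneg_right hr1.le (by positivity)
          have h2 : (0:ℝ) ≤ (m:ℝ) * (8 * ((m:ℝ) + 2)) :=
            mul_nonneg hx (by positivity)
          nlinarith [h1, h2]
        have hinc : c₄ * (b m) ^ 2 / (rs m ^ 4 * δs m ^ 4) ≤
            1 / (4 * ((m:ℝ) + 2)) - 1 / (4 * ((m:ℝ) + 3)) := by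
          have e : 1 / (4 * ((m:ℝ) + 2)) - 1 / (4 * ((m:ℝ) + 3)) =
              1 / (4 * ((m:ℝ) + 2) * ((m:ℝ) + 3)) := by
            field_simp
            ring
          rw [e]
          calc c₄ * (b m) ^ 2 / (rs m ^ 4 * δs m ^ 4)
              = c₄ * (b m) ^ 2 / P ^ 4 := by rw [eP4]
            _ ≤ c₄ * (P ^ 3 / c₆) ^ 2 / P ^ 4 := by
                gcongr
                exact hb0 m
            _ = c₄ * P ^ 2 / c₆ ^ 2 := by field_simp
            _ ≤ P ^ 2 / 729 := by
                rw [div_le_div_iff₀ (by positivity) (by norm_num)]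
                have h729 : 729 * c₄ ≤ c₆ ^ 2 := by nlinarith
                nlinarith [mul_le_mul_of_nonneg_right h729 (sq_nonneg P)]
            _ ≤ (1 / (8 * ((m:ℝ) + 2))) ^ 2 / 729 := by
                gcongr
            _ = 1 / (46656 * ((m:ℝ) + 2) ^ 2) := by
                rw [div_pow]
                field_simp
                ring
            _ ≤ 1 / (4 * ((m:ℝ) + 2) * ((m:ℝ) + 3)) := by
                rw [div_le_div_iff₀ (by positivity) (by positivity)]
                nlinarith [mul_nonneg (by linarith : (0:ℝ) ≤ (m:ℝ) + 2)
                  (by linarith : (0:ℝ) ≤ 46652 * (m:ℝ) + 93300)]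
        have hB := hrec_B m hmN
        push_cast
        have e3 : 4 * ((m:ℝ) + 1 + 2) = 4 * ((m:ℝ) + 3) := by ring
        rw [e3]
        linarith
  intro m hm
  obtain ⟨h1, h2⟩ := main m hm
  refine ⟨h1, ?_⟩
  have : (0:ℝ) < 1 / (4 * ((m:ℝ) + 2)) := by positivity
  linarith
end

section
/- Fix 0 < r < 1, set r_m = (1/2)(1 + 1/(m+1))r and δ_m = e^{-2}n^{-1}/(2(m+2)²) for a fixed n ≥ 1. Let c₇ ≥ 1 and c₈ = max{c₇, 4e^{n+2}π}. If nonnegative numbers a₀, a₁, …, a_N satisfy a_{m+1} ≤ c₇ a_m²/(r_m δ_m) for 0 ≤ m < N and a₀ ≤ r₀δ₀²/c₈, then a_m ≤ r_m δ_m²/c₈ for all 0 ≤ m ≤ N. -/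
open scoped Real

private lemma kam_key_ineq (n x E r : ℝ) (hn' : 1 ≤ n) (hE0 : 0 < E) (hE : E ≤ 1/3)
    (hr0 : 0 < r) (hx0 : 0 ≤ x) :
    1 / 2 * (1 + 1 / (x + 1)) * r * ((E * n⁻¹) ^ 3 / (2 * (x + 2) ^ 2) ^ 3) ≤
    1 / 2 * (1 + 1 / (x + 1 + 1)) * r * ((E * n⁻¹) ^ 2 / (2 * (x + 1 + 2) ^ 2) ^ 2) := by
  have h1p : (0:ℝ) < x + 1 := by linarith
  have h2p : (0:ℝ) < x + 2 := by linarith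
  have h3p : (0:ℝ) < x + 3 := by linarith
  have hn0 : (0:ℝ) < n := by linarith
  have KEY : E * (x+3)^3 ≤ 2*n*((x+1)*(x+2)^4) := by
    have k1 : (x+3)^3 ≤ 8*(x+2)^3 := by nlinarith [pow_nonneg hx0 3, sq_nonneg x]
    have k2 : E*(x+3)^3 ≤ (1/3)*(x+3)^3 := mul_le_mul_of_nonneg_right hE (by positivity)
    have k3 : (8:ℝ)*(x+2)^3 ≤ 6*(x+2)^4 := by
      nlinarith [mul_nonneg (pow_nonneg h2p.le 3) hx0]
    have hnx : (1:ℝ) ≤ n*(x+1) := by nlinarith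
    have k4 : (2:ℝ)*(x+2)^4 ≤ 2*n*((x+1)*(x+2)^4) := by nlinarith [pow_pos h2p 4]
    linarith
  have eL : 1 / 2 * (1 + 1 / (x + 1)) * r * ((E * n⁻¹) ^ 3 / (2 * (x + 2) ^ 2) ^ 3)
      = (r*E^3) / (16*n^3*(x+1)*(x+2)^5) := by
    field_simp
    ring
  have eR : 1 / 2 * (1 + 1 / (x + 1 + 1)) * r * ((E * n⁻¹) ^ 2 / (2 * (x + 1 + 2) ^ 2) ^ 2)
      = (r*E^2) / (8*n^2*(x+2)*(x+3)^3) := by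
    field_simp
    ring
  rw [eL, eR, div_le_div_iff₀ (by positivity) (by positivity)]
  nlinarith [mul_le_mul_of_nonneg_left KEY (by positivity : (0:ℝ) ≤ r*E^2*(8*n^2*(x+2)))]

/-- The numerical lemma (Lemma 4.2r) for the second KAM iteration. -/
theorem kam_numerical_lemma' (n : ℕ) (hn : 1 ≤ n) (c₇ : ℝ) (hc₇ : 1 ≤ c₇)
    (r : ℝ) (hr0 : 0 < r) (hr1 : r < 1)
    (rs δs : ℕ → ℝ)
    (hrs : ∀ m, rs m = (1 / 2) * (1 + 1 / (m + 1)) * r)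
    (hδs : ∀ m, δs m = Real.exp (-2) * (n : ℝ)⁻¹ / (2 * (m + 2) ^ 2))
    (c₈ : ℝ) (hc₈ : c₈ = max c₇ (4 * Real.exp (n + 2) * π))
    (N : ℕ) (a : ℕ → ℝ) (ha0 : ∀ m, 0 ≤ a m)
    (hrec : ∀ m < N, a (m + 1) ≤ c₇ * (a m) ^ 2 / (rs m * δs m))
    (ha_init : a 0 ≤ rs 0 * δs 0 ^ 2 / c₈) :
    ∀ m ≤ N, a m ≤ rs m * δs m ^ 2 / c₈ := by
  have hn' : (1:ℝ) ≤ (n:ℝ) := by exact_mod_cast hn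
  have hn0 : (0:ℝ) < (n:ℝ) := by linarith
  have hE0 : 0 < Real.exp (-2) := Real.exp_pos _
  have hE : Real.exp (-2) ≤ 1/3 := by
    rw [Real.exp_neg]
    have h3 : (3:ℝ) ≤ Real.exp 2 := by
      have := Real.add_one_le_exp (2:ℝ)
      linarith
    rw [show (1:ℝ)/3 = 3⁻¹ by norm_num]
    exact inv_anti₀ (by norm_num) h3
  have hc₈c₇ : c₇ ≤ c₈ := by rw [hc₈]; exact le_max_left _ _
  have hc₈1 : (1:ℝ) ≤ c₈ := le_trans hc₇ hc₈c₇
  have hc₈0 : (0:ℝ) < c₈ := by linarith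
  have hrs_pos : ∀ m : ℕ, 0 < rs m := by
    intro m; rw [hrs]
    have : (0:ℝ) < (m:ℝ) + 1 := by positivity
    positivity
  have hδs_pos : ∀ m : ℕ, 0 < δs m := by
    intro m; rw [hδs]
    positivity
  intro m hm
  induction m with
  | zero => exact ha_init
  | succ k ih =>
    have hkN : k < N := hm
    have hak : a k ≤ rs k * δs k ^ 2 / c₈ := ih (le_of_lt hkN)
    have hrk := hrs_pos k
    have hdk := hδs_pos k
    have hrk1 := hrs_pos (k+1)
    have hdk1 := hδs_pos (k+1)
    have h1 : a (k+1) ≤ c₇ * (a k)^2 / (rs k * δs k) := hrec k hkN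
    have hsq : (a k)^2 ≤ (rs k * δs k^2 / c₈)^2 :=
      pow_le_pow_left₀ (ha0 k) hak 2
    have hB : c₇ * (a k)^2 / (rs k * δs k) ≤ c₇ * (rs k * δs k^2 / c₈)^2 / (rs k * δs k) := by
      apply div_le_div_of_nonneg_right ?_ (by positivity)
      nlinarith [hsq]
    have h2 : c₇ * (rs k * δs k^2 / c₈)^2 / (rs k * δs k) = c₇ * (rs k * δs k^3) / c₈^2 := by
      field_simp
    have hkey : rs k * δs k ^ 3 ≤ rs (k+1) * δs (k+1) ^ 2 := by
      rw [hrs, hrs, hδs, hδs]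
      push_cast
      rw [div_pow, div_pow]
      exact kam_key_ineq (n:ℝ) (k:ℝ) (Real.exp (-2)) r hn' hE0 hE hr0 (Nat.cast_nonneg k)
    have h3 : c₇ * (rs k * δs k^3) / c₈^2 ≤ rs (k+1) * δs (k+1)^2 / c₈ := by
      rw [div_le_div_iff₀ (by positivity) hc₈0]
      have hmm : c₇ * (rs k * δs k ^ 3) ≤ c₈ * (rs (k+1) * δs (k+1)^2) :=
        mul_le_mul hc₈c₇ hkey (by positivity) (by linarith)
      nlinarith [hmm]
    calc a (k+1) ≤ c₇ * (a k)^2 / (rs k * δs k) := h1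
      _ ≤ c₇ * (rs k * δs k^2 / c₈)^2 / (rs k * δs k) := hB
      _ = c₇ * (rs k * δs k^3) / c₈^2 := h2
      _ ≤ rs (k+1) * δs (k+1)^2 / c₈ := h3
end

section
/- Let p₁,…,pₙ be holomorphic on the polystrip S_{r₁} ⊂ ℂⁿ, 2π-periodic in each variable, with ‖p‖_{r₁} ≤ r₁δ where 0 < δ < 1/2. Let φ_t(θ) = θ + f(θ,t) be the flow of dθ/dt = p(θ). Then for all |t| ≤ 1: the flow is defined with φ_t(S_{(1-δ)r₁}) ⊆ S_{r₁}, ‖f(·,t)‖_{(1-δ)r₁} ≤ ‖p‖_{r₁}, and ‖f_j(·,t) - t·p_j(·)‖_{(1-2δ)r₁} ≤ n‖p‖_{r₁}²/(r₁δ), and each f_j(·,t) is 2π-periodic. -/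
open scoped Real

/-!
By the Cauchy estimate on complex lines, `‖Dp‖ ≤ C / b` at distance `b` inside `S_{r₁}`, so `p`
is `C / b`-Lipschitz on `S_{r₁ - b}`. A trajectory has speed at most `C ≤ δ r₁`, so up to time `1`
it cannot leave `S_{r₁}` when started in `S_{(1-δ)r₁}`; as the starting point even lies in a
thinner strip, the trajectory stays in a strip strictly inside `S_{r₁}` a little beyond time `1`,
where `p` is Lipschitz, so Picard–Lindelöf applies.
Uniqueness of solutions, applied to `φ_t(θ) + 2π e_j`, gives periodicity. Finally
`f(θ,t) - t p(θ) = ∫₀ᵗ (p(φ_τ θ) - p(θ)) dτ` has norm at most `(C / (δ r₁)) · C · |t|`.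
-/

open Metric Set Filter Topology

section CauchyEstimate

variable {E F : Type*} [NormedAddCommGroup E] [NormedSpace ℂ E] [NormedAddCommGroup F]
  [NormedSpace ℂ F]

theorem norm_fderiv_le_of_forall_mem_closedBall {f : E → F} {x : E} {b C : ℝ} (hb : 0 < b)
    (hf : DifferentiableOn ℂ f (closedBall x b)) (hC : ∀ y ∈ closedBall x b, ‖f y‖ ≤ C) :
    ‖fderiv ℂ f x‖ ≤ C / b := by
  have hC0 : 0 ≤ C := (norm_nonneg _).trans (hC x (mem_closedBall_self hb.le))
  refine ContinuousLinearMap.opNorm_le_bound _ (by positivity) fun h => ?_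
  rcases eq_or_ne h 0 with rfl | hh
  · simp
  have hh : 0 < ‖h‖ := norm_pos_iff.2 hh
  -- the one-variable Cauchy estimate on the complex line through `x` in direction `h`
  have hmaps : MapsTo (fun z : ℂ => x + z • h) (closedBall 0 (b / ‖h‖)) (closedBall x b) := by
    intro z hz
    rw [mem_closedBall_zero_iff, le_div_iff₀ hh] at hz
    simpa [norm_smul] using hz
  have hg : DifferentiableOn ℂ (fun z : ℂ => f (x + z • h)) (closedBall 0 (b / ‖h‖)) :=
    hf.comp (by fun_prop) hmaps
  have hderiv : deriv (fun z : ℂ => f (x + z • h)) 0 = fderiv ℂ f x h := by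
    have hfx : HasFDerivAt f (fderiv ℂ f x) (x + (0 : ℂ) • h) := by
      simpa using (hf.differentiableAt (closedBall_mem_nhds x hb)).hasFDerivAt
    have hline : HasDerivAt (fun z : ℂ => x + z • h) h 0 := by
      simpa using ((hasDerivAt_id (0 : ℂ)).smul_const h).const_add x
    exact (hfx.comp_hasDerivAt 0 hline).deriv
  calc ‖fderiv ℂ f x h‖ = ‖deriv (fun z : ℂ => f (x + z • h)) 0‖ := by rw [hderiv]
    _ ≤ C / (b / ‖h‖) :=
      Complex.norm_deriv_le_of_forall_mem_sphere_norm_le (by positivity)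
        (hg.diffContOnCl_ball subset_rfl) fun z hz => hC _ (hmaps (sphere_subset_closedBall hz))
    _ = C / b * ‖h‖ := by field_simp

theorem lipschitzOnWith_of_closedBall_subset {f : E → F} {s U : Set E} {b C : ℝ}
    (hs : Convex ℝ s) (hb : 0 < b) (hf : DifferentiableOn ℂ f U) (hC : ∀ y ∈ U, ‖f y‖ ≤ C)
    (hsU : ∀ x ∈ s, closedBall x b ⊆ U) :
    LipschitzOnWith (C / b).toNNReal f s := by
  refine hs.lipschitzOnWith_of_nnnorm_fderiv_le (𝕜 := ℂ)
    (fun x hx => hf.differentiableAt (mem_of_superset (closedBall_mem_nhds x hb) (hsU x hx)))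
    fun x hx => ?_
  have hbound := norm_fderiv_le_of_forall_mem_closedBall hb (hf.mono (hsU x hx))
    fun y hy => hC y (hsU x hx hy)
  exact (Real.le_toNNReal_iff_coe_le ((norm_nonneg _).trans hbound)).2 hbound

end CauchyEstimate

section FlowLine

variable {E : Type*} [NormedAddCommGroup E] [NormedSpace ℝ E]

def IsFlowLine (v : E → E) (C : ℝ) (x : E) (α : ℝ → E) : Prop :=
  α 0 = x ∧ ∀ t ∈ Icc (-1 : ℝ) 1, HasDerivAt α (v (α t)) t ∧ ‖α t - x‖ ≤ C

theorem exists_hasDerivAt_norm_sub_le_of_lipschitzWith [CompleteSpace E] {v : E → E}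
    {K : NNReal} {L T : ℝ} (hv : LipschitzWith K v) (hL : ∀ x, ‖v x‖ ≤ L) (hT : 0 ≤ T) (x₀ : E) :
    ∃ α : ℝ → E, α 0 = x₀ ∧
      ∀ t ∈ Ioo (-T) T, HasDerivAt α (v (α t)) t ∧ ‖α t - x₀‖ ≤ L * |t| := by
  have hpl : IsPicardLindelof (fun _ => v) (tmin := -T) (tmax := T) ⟨0, by simp [hT]⟩ x₀
      (L.toNNReal * T.toNNReal) 0 L.toNNReal K :=
    .of_time_independent (fun x _ => (hL x).trans (Real.le_coe_toNNReal L)) hv.lipschitzOnWith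
      (by simp [Real.coe_toNNReal T hT])
  obtain ⟨α, hα0, hα⟩ := hpl.exists_eq_forall_mem_Icc_hasDerivWithinAt₀
  refine ⟨α, hα0, fun t ht => ⟨(hα t (Ioo_subset_Icc_self ht)).hasDerivAt
    (Icc_mem_nhds ht.1 ht.2), ?_⟩⟩
  have h0 : (0 : ℝ) ∈ Icc (-T) T := ⟨by linarith, hT⟩
  simpa [← hα0, Real.norm_eq_abs] using
    (convex_Icc (-T) T).norm_image_sub_le_of_norm_hasDerivWithin_le hα (fun s _ => hL (α s)) h0
      (Ioo_subset_Icc_self ht)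

theorem IsFlowLine.add_const {v : E → E} {C : ℝ} {x c : E} {α : ℝ → E}
    (hα : IsFlowLine v C x α) (hv : ∀ y, v (y + c) = v y) :
    IsFlowLine v C (x + c) (fun t => α t + c) := by
  refine ⟨congrArg (· + c) hα.1, fun t ht => ?_⟩
  obtain ⟨hderiv, hnorm⟩ := hα.2 t ht
  exact ⟨by simpa only [hv] using hderiv.add_const c, by rwa [add_sub_add_right_eq_sub]⟩

theorem IsFlowLine.norm_sub_sub_smul_le {v : E → E} {C : ℝ} {x : E} {α : ℝ → E} {K : NNReal}
    {s : Set E} (hα : IsFlowLine v C x α) (hv : LipschitzOnWith K v s)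
    (hs : ∀ t ∈ Icc (-1 : ℝ) 1, α t ∈ s) {t : ℝ} (ht : t ∈ Icc (-1 : ℝ) 1) :
    ‖α t - x - t • v x‖ ≤ K * C * |t| := by
  have h0 : (0 : ℝ) ∈ Icc (-1 : ℝ) 1 := by norm_num
  have hx : x ∈ s := hα.1 ▸ hs 0 h0
  have hderiv : ∀ u ∈ Icc (-1 : ℝ) 1, HasDerivWithinAt (fun u => α u - x - u • v x)
      (v (α u) - v x) (Icc (-1 : ℝ) 1) u := fun u hu =>
    (((hα.2 u hu).1.sub_const x).sub (hasDerivAt_id u |>.smul_const (v x)) |>.congr_deriv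
      (by simp)).hasDerivWithinAt
  have hbound : ∀ u ∈ Icc (-1 : ℝ) 1, ‖v (α u) - v x‖ ≤ K * C := fun u hu =>
    (hv.norm_sub_le (hs u hu) hx).trans (mul_le_mul_of_nonneg_left (hα.2 u hu).2 K.2)
  simpa [hα.1, Real.norm_eq_abs] using
    (convex_Icc (-1 : ℝ) 1).norm_image_sub_le_of_norm_hasDerivWithin_le hderiv hbound h0 ht

end FlowLine

section PolyStrip

variable {n : ℕ}

theorem polyStrip_mono {ρ ρ' : ℝ} (h : ρ ≤ ρ') : polyStrip n ρ ⊆ polyStrip n ρ' :=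
  fun _ hθ j => (hθ j).trans_le h

theorem convex_polyStrip (ρ : ℝ) : Convex ℝ (polyStrip n ρ) := by
  have : polyStrip n ρ = ⋂ j, (fun θ : Fin n → ℂ => (θ j).im) ⁻¹' Ioo (-ρ) ρ := by
    ext θ; simp [polyStrip, abs_lt]
  rw [this]
  exact convex_iInter fun j => (convex_Ioo (-ρ) ρ).linear_preimage
    (Complex.imLm.comp (LinearMap.proj j) : (Fin n → ℂ) →ₗ[ℝ] ℝ)

theorem abs_im_le_abs_im_add_norm_sub (x θ : Fin n → ℂ) (j : Fin n) :
    |(x j).im| ≤ |(θ j).im| + ‖x - θ‖ := by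
  have h : (x j).im = (θ j).im + (x j - θ j).im := by simp
  calc |(x j).im| ≤ |(θ j).im| + |(x j - θ j).im| := h ▸ abs_add_le _ _
    _ ≤ |(θ j).im| + ‖x - θ‖ := by
      gcongr; exact (Complex.abs_im_le_norm _).trans (norm_le_pi_norm (x - θ) j)

theorem closedBall_subset_polyStrip {ρ d : ℝ} {θ : Fin n → ℂ} (hθ : θ ∈ polyStrip n ρ) :
    closedBall θ d ⊆ polyStrip n (ρ + d) := fun x hx j =>
  (abs_im_le_abs_im_add_norm_sub x θ j).trans_lt
    (add_lt_add_of_lt_of_le (hθ j) (mem_closedBall_iff_norm.1 hx))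

theorem exists_lt_mem_polyStrip {ρ : ℝ} {θ : Fin n → ℂ} (hθ : θ ∈ polyStrip n ρ) :
    ∃ ρ' < ρ, θ ∈ polyStrip n ρ' :=
  (eventually_mem_nhdsWithin.and (nhdsWithin_le_nhds
    (eventually_all.2 fun j => eventually_gt_nhds (hθ j)))).exists (f := 𝓝[<] ρ)

theorem add_mem_polyStrip {ρ : ℝ} {θ c : Fin n → ℂ} (hθ : θ ∈ polyStrip n ρ)
    (hc : ∀ j, (c j).im = 0) : θ + c ∈ polyStrip n ρ := fun j => by
  simpa [hc j] using hθ j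

theorem lipschitzOnWith_polyStrip {F : Type*} [NormedAddCommGroup F] [NormedSpace ℂ F]
    {p : (Fin n → ℂ) → F} {r ρ b C : ℝ} (hp : DifferentiableOn ℂ p (polyStrip n r))
    (hC : ∀ x ∈ polyStrip n r, ‖p x‖ ≤ C) (hb : 0 < b) (hρb : ρ + b ≤ r) :
    LipschitzOnWith (C / b).toNNReal p (polyStrip n ρ) :=
  lipschitzOnWith_of_closedBall_subset (convex_polyStrip ρ) hb hp hC fun _ hx =>
    (closedBall_subset_polyStrip hx).trans (polyStrip_mono hρb)

end PolyStrip

section Truncation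

def clampIm (a : ℝ) (z : ℂ) : ℂ := ⟨z.re, max (-a) (min a z.im)⟩

theorem abs_im_clampIm_le {a : ℝ} (ha : 0 ≤ a) (z : ℂ) : |(clampIm a z).im| ≤ a :=
  abs_le.2 ⟨le_max_left _ _, max_le (by linarith) (min_le_left _ _)⟩

theorem clampIm_eq_self {a : ℝ} {z : ℂ} (h : |z.im| ≤ a) : clampIm a z = z := by
  obtain ⟨h₁, h₂⟩ := abs_le.1 h
  exact Complex.ext rfl (by simp [clampIm, min_eq_right h₂, max_eq_right h₁])

theorem dist_clampIm_le (a : ℝ) (z w : ℂ) : dist (clampIm a z) (clampIm a w) ≤ dist z w := by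
  have him : LipschitzWith 1 fun u : ℝ => max (-a) (min a u) :=
    (LipschitzWith.id.const_min a).const_max (-a)
  have h := him.dist_le_mul z.im w.im
  rw [NNReal.coe_one, one_mul, Real.dist_eq, Real.dist_eq] at h
  rw [Complex.dist_eq_re_im, Complex.dist_eq_re_im]
  exact Real.sqrt_le_sqrt (add_le_add_right (sq_le_sq.2 h) _)

theorem lipschitzWith_clampIm_pi {n : ℕ} (a : ℝ) :
    LipschitzWith 1 fun (x : Fin n → ℂ) j => clampIm a (x j) :=
  LipschitzWith.of_dist_le_mul fun x y => by
    simpa using (dist_pi_le_iff dist_nonneg).2 fun j =>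
      (dist_clampIm_le a (x j) (y j)).trans (dist_le_pi_dist x y j)

end Truncation

section StripFlow

variable {n : ℕ} {p : (Fin n → ℂ) → (Fin n → ℂ)} {r ρ C : ℝ}

theorem exists_isFlowLine (hp : DifferentiableOn ℂ p (polyStrip n r))
    (hC : ∀ x ∈ polyStrip n r, ‖p x‖ ≤ C) (hC0 : 0 ≤ C) (hρ : ρ + C ≤ r) {θ : Fin n → ℂ}
    (hθ : θ ∈ polyStrip n ρ) : ∃ α, IsFlowLine p C θ α := by
  obtain ⟨ρ', hρ', hθ'⟩ := exists_lt_mem_polyStrip hθ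
  obtain ⟨T, hT1, hTr⟩ : ∃ T > 1, ρ' + C * T < r :=
    (eventually_mem_nhdsWithin.and (nhdsWithin_le_nhds
      ((by fun_prop : Continuous fun T : ℝ => ρ' + C * T).tendsto 1 |>.eventually_lt_const
        (by linarith)))).exists (f := 𝓝[>] 1)
  set a := ρ' + C * T
  have ha : ∀ j, |(θ j).im| + C * T ≤ a := fun j => by linarith [hθ' j]
  have hCT : 0 ≤ C * T := mul_nonneg hC0 (by linarith)
  -- Truncating the imaginary parts at `a` makes `p` globally bounded and Lipschitz; the
  -- trajectory up to time `T` never reaches the truncation.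
  set q : (Fin n → ℂ) → (Fin n → ℂ) := fun x => p fun j => clampIm a (x j)
  have hclamp : ∀ x : Fin n → ℂ, (fun j => clampIm a (x j)) ∈ polyStrip n ((a + r) / 2) :=
    fun x j => (abs_im_clampIm_le (by linarith [abs_nonneg (θ j).im, ha j]) _).trans_lt
      (by linarith)
  have hq : LipschitzWith ((C / ((r - a) / 2)).toNNReal * 1) q := lipschitzOnWith_univ.1 <|
    (lipschitzOnWith_polyStrip hp hC (by linarith) (by linarith)).comp
      (lipschitzWith_clampIm_pi a).lipschitzOnWith fun x _ => hclamp x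
  obtain ⟨α, hα0, hα⟩ := exists_hasDerivAt_norm_sub_le_of_lipschitzWith hq
    (fun x => hC _ (polyStrip_mono (by linarith) (hclamp x))) (by linarith) θ
  refine ⟨α, hα0, fun t ht => ?_⟩
  have ht1 : |t| ≤ 1 := abs_le.2 ht
  obtain ⟨hderiv, hnorm⟩ := hα t ⟨by linarith [ht.1], by linarith [ht.2]⟩
  have hfix : (fun j => clampIm a (α t j)) = α t := funext fun j => clampIm_eq_self <| by
    linarith [abs_im_le_abs_im_add_norm_sub (α t) θ j, ha j,
      mul_le_mul_of_nonneg_left (ht1.trans hT1.le) hC0]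
  exact ⟨by simpa only [q, hfix] using hderiv, hnorm.trans (mul_le_of_le_one_right hC0 ht1)⟩

theorem IsFlowLine.eqOn (hp : DifferentiableOn ℂ p (polyStrip n r))
    (hC : ∀ x ∈ polyStrip n r, ‖p x‖ ≤ C) (hρ : ρ + C ≤ r) {θ : Fin n → ℂ}
    (hθ : θ ∈ polyStrip n ρ) {α β : ℝ → (Fin n → ℂ)} (hα : IsFlowLine p C θ α)
    (hβ : IsFlowLine p C θ β) : EqOn α β (Icc (-1) 1) := by
  obtain ⟨ρ', hρ', hθ'⟩ := exists_lt_mem_polyStrip hθ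
  have hmem : ∀ γ, IsFlowLine p C θ γ → ∀ t ∈ Ioo (-1 : ℝ) 1, γ t ∈ polyStrip n (ρ' + C) :=
    fun γ hγ t ht => closedBall_subset_polyStrip hθ'
      (mem_closedBall_iff_norm.2 (hγ.2 t (Ioo_subset_Icc_self ht)).2)
  have hlip := lipschitzOnWith_polyStrip hp hC (ρ := ρ' + C) (b := r - (ρ' + C))
    (by linarith) (by linarith)
  exact ODE_solution_unique_of_mem_Icc (v := fun _ => p) (fun _ _ => hlip) (t₀ := 0)
    (by norm_num) (HasDerivAt.continuousOn fun t ht => (hα.2 t ht).1)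
    (fun t ht => (hα.2 t (Ioo_subset_Icc_self ht)).1) (hmem α hα)
    (HasDerivAt.continuousOn fun t ht => (hβ.2 t ht).1)
    (fun t ht => (hβ.2 t (Ioo_subset_Icc_self ht)).1) (hmem β hβ) (hα.1.trans hβ.1.symm)

end StripFlow

theorem flow_estimates_on_strip_general (n : ℕ) (hn : 1 ≤ n) (r₁ δ C : ℝ)
    (hr₁ : 0 < r₁) (hδ0 : 0 < δ)
    (p : (Fin n → ℂ) → (Fin n → ℂ))
    (hhol : DifferentiableOn ℂ p (polyStrip n r₁))
    (hper : ∀ θ : Fin n → ℂ, ∀ j k : Fin n,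
      p (fun i => θ i + if i = j then (2 * π : ℂ) else 0) k = p θ k)
    (hbound : ∀ θ ∈ polyStrip n r₁, ∀ j, ‖p θ j‖ ≤ C)
    (hsmall : C ≤ r₁ * δ) :
    ∃ φ : ℝ → (Fin n → ℂ) → (Fin n → ℂ),
      (∀ θ ∈ polyStrip n ((1 - δ) * r₁), φ 0 θ = θ) ∧
      (∀ θ ∈ polyStrip n ((1 - δ) * r₁), ∀ t ∈ Set.Icc (-1 : ℝ) 1,
        HasDerivAt (fun s => φ s θ) (p (φ t θ)) t ∧
        φ t θ ∈ polyStrip n r₁ ∧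
        ∀ j, ‖φ t θ j - θ j‖ ≤ C) ∧
      (∀ θ ∈ polyStrip n ((1 - δ) * r₁), ∀ t ∈ Set.Icc (-1 : ℝ) 1, ∀ j k : Fin n,
        φ t (fun i => θ i + if i = j then (2 * π : ℂ) else 0) k
          = φ t θ k + if k = j then (2 * π : ℂ) else 0) ∧
      (∀ θ ∈ polyStrip n ((1 - 2 * δ) * r₁), ∀ t ∈ Set.Icc (-1 : ℝ) 1, ∀ j,
        ‖φ t θ j - θ j - t • p θ j‖ ≤ n * C ^ 2 / (r₁ * δ)) := by
  have hC0 : 0 ≤ C := (norm_nonneg _).trans (hbound 0 (fun j => by simpa using hr₁) ⟨0, hn⟩)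
  have hC : ∀ x ∈ polyStrip n r₁, ‖p x‖ ≤ C := fun x hx =>
    (pi_norm_le_iff_of_nonneg hC0).2 (hbound x hx)
  have hρ : (1 - δ) * r₁ + C ≤ r₁ := by linarith
  choose! φ hφ using fun θ (hθ : θ ∈ polyStrip n ((1 - δ) * r₁)) =>
    exists_isFlowLine hhol hC hC0 hρ hθ
  refine ⟨fun t θ => φ θ t, fun θ hθ => (hφ θ hθ).1, fun θ hθ t ht => ?_, ?_, ?_⟩
  · obtain ⟨hderiv, hnorm⟩ := (hφ θ hθ).2 t ht
    exact ⟨hderiv, polyStrip_mono hρ (closedBall_subset_polyStrip hθ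
      (mem_closedBall_iff_norm.2 hnorm)), fun j => (norm_le_pi_norm _ j).trans hnorm⟩
  · intro θ hθ t ht j k
    set c : Fin n → ℂ := fun i => if i = j then (2 * π : ℂ) else 0
    have hθc : θ + c ∈ polyStrip n ((1 - δ) * r₁) :=
      add_mem_polyStrip hθ fun i => by by_cases h : i = j <;> simp [c, h]
    exact congrFun (IsFlowLine.eqOn hhol hC hρ hθc (hφ _ hθc)
      ((hφ θ hθ).add_const fun y => funext (hper y j)) ht) k
  · intro θ hθ t ht j
    have hθ' : θ ∈ polyStrip n ((1 - δ) * r₁) := polyStrip_mono (by nlinarith) hθ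
    have hlip := lipschitzOnWith_polyStrip hhol hC (ρ := (1 - δ) * r₁) (b := δ * r₁)
      (by positivity) (by linarith)
    have hmem : ∀ u ∈ Icc (-1 : ℝ) 1, φ θ u ∈ polyStrip n ((1 - δ) * r₁) := fun u hu =>
      polyStrip_mono (by linarith) (closedBall_subset_polyStrip hθ
        (mem_closedBall_iff_norm.2 ((hφ θ hθ').2 u hu).2))
    have hn' : (1 : ℝ) ≤ n := by exact_mod_cast hn
    calc ‖φ θ t j - θ j - t • p θ j‖ ≤ ‖φ θ t - θ - t • p θ‖ :=
        norm_le_pi_norm (φ θ t - θ - t • p θ) j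
      _ ≤ (C / (δ * r₁)).toNNReal * C * |t| := (hφ θ hθ').norm_sub_sub_smul_le hlip hmem ht
      _ ≤ C / (δ * r₁) * C * 1 := by
        rw [Real.coe_toNNReal _ (by positivity)]; gcongr; exact abs_le.2 ht
      _ ≤ n * C ^ 2 / (r₁ * δ) := by
        rw [mul_one, mul_comm δ, div_mul_eq_mul_div, ← sq]; gcongr; nlinarith [sq_nonneg C]

/-- Estimates for the flow of a small `2π`-periodic holomorphic vector field on a polystrip
(Lemma on flows): the flow `φ_t(θ) = θ + f(θ,t)` exists for `|t| ≤ 1`, maps `S_{(1-δ)r₁}`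
into `S_{r₁}` with `‖f(·,t)‖ ≤ ‖p‖_{r₁}`, is `2π`-periodic, and
`‖f_j(·,t) - t p_j‖_{(1-2δ)r₁} ≤ n ‖p‖_{r₁}²/(r₁ δ)`. -/
theorem flow_estimates_on_strip (n : ℕ) (hn : 1 ≤ n) (r₁ δ C : ℝ)
    (hr₁ : 0 < r₁) (hδ0 : 0 < δ) (hδ1 : δ < 1 / 2)
    (p : (Fin n → ℂ) → (Fin n → ℂ))
    (hhol : DifferentiableOn ℂ p (polyStrip n r₁))
    (hper : ∀ θ : Fin n → ℂ, ∀ j k : Fin n,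
      p (fun i => θ i + if i = j then (2 * π : ℂ) else 0) k = p θ k)
    (hbound : ∀ θ ∈ polyStrip n r₁, ∀ j, ‖p θ j‖ ≤ C)
    (hsmall : C ≤ r₁ * δ) :
    ∃ φ : ℝ → (Fin n → ℂ) → (Fin n → ℂ),
      (∀ θ ∈ polyStrip n ((1 - δ) * r₁), φ 0 θ = θ) ∧
      (∀ θ ∈ polyStrip n ((1 - δ) * r₁), ∀ t ∈ Set.Icc (-1 : ℝ) 1,
        HasDerivAt (fun s => φ s θ) (p (φ t θ)) t ∧
        φ t θ ∈ polyStrip n r₁ ∧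
        ∀ j, ‖φ t θ j - θ j‖ ≤ C) ∧
      (∀ θ ∈ polyStrip n ((1 - δ) * r₁), ∀ t ∈ Set.Icc (-1 : ℝ) 1, ∀ j k : Fin n,
        φ t (fun i => θ i + if i = j then (2 * π : ℂ) else 0) k
          = φ t θ k + if k = j then (2 * π : ℂ) else 0) ∧
      (∀ θ ∈ polyStrip n ((1 - 2 * δ) * r₁), ∀ t ∈ Set.Icc (-1 : ℝ) 1, ∀ j,
        ‖φ t θ j - θ j - t • p θ j‖ ≤ n * C ^ 2 / (r₁ * δ)) :=
  flow_estimates_on_strip_general n hn r₁ δ C hr₁ hδ0 p hhol hper hbound hsmall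
end
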